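/- arXiv:2601.23029 — 3 statements merged into one kernel-verified Lean document; each statement's English description precedes it below -/
import Mathlib

section
/- For every ε > 0 there exists δ > 0 such that for every C*-algebra A, every positive contraction a ∈ A, and every contraction x ∈ A with ‖[x,a]‖ < δ, one has ‖[x,√a]‖ < ε. -/
set_option maxHeartbeats 2000000

open Polynomial

/-- Commutator with powers: `‖[x, bⁿ]‖ ≤ n ‖[x,b]‖` for a contraction `b`. -/
lemma comm_pow_bound_aux {B : Type*} [NormedRing B] [NormOneClass B] (b x : B)
    (hb : ‖b‖ ≤ 1) : ∀ n : ℕ, ‖x * b ^ n - b ^ n * x‖ ≤ n * ‖x * b - b * x‖ := by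
  intro n
  induction n with
  | zero => simp
  | succ n ih =>
    have key : x * b ^ (n + 1) - b ^ (n + 1) * x
        = (x * b ^ n - b ^ n * x) * b + b ^ n * (x * b - b * x) := by
      simp only [pow_succ]
      noncomm_ring
    have hbn : ‖b ^ n‖ ≤ 1 := by
      rcases Nat.eq_zero_or_pos n with h | h
      · simp [h]
      · exact (norm_pow_le' b h).trans (pow_le_one₀ (norm_nonneg b) hb)
    have hd : (0:ℝ) ≤ ‖x * b - b * x‖ := norm_nonneg _
    calc ‖x * b ^ (n + 1) - b ^ (n + 1) * x‖
        ≤ ‖(x * b ^ n - b ^ n * x) * b‖ + ‖b ^ n * (x * b - b * x)‖ := by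
          rw [key]; exact norm_add_le _ _
      _ ≤ ‖x * b ^ n - b ^ n * x‖ * ‖b‖ + ‖b ^ n‖ * ‖x * b - b * x‖ := by
          gcongr <;> [exact norm_mul_le _ _; exact norm_mul_le _ _]
      _ ≤ (n * ‖x * b - b * x‖) * 1 + 1 * ‖x * b - b * x‖ := by
          gcongr
      _ = (n + 1 : ℕ) * ‖x * b - b * x‖ := by push_cast; ring

/-- For every ε > 0 there exists a universal δ > 0 such that in every
C*-algebra `A`, for every positive contraction `a` and every contraction `x` with
`‖[x,a]‖ < δ`, one has `‖[x,√a]‖ < ε`, where `√a = CFC.sqrt a`. -/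
theorem universal_sqrt_commutator_estimate :
    ∀ ε : ℝ, 0 < ε → ∃ δ : ℝ, 0 < δ ∧
      ∀ (A : Type) (_ : NonUnitalCStarAlgebra A) (_ : PartialOrder A)
        (_ : StarOrderedRing A) (a x : A),
        0 ≤ a → ‖a‖ ≤ 1 → ‖x‖ ≤ 1 →
        ‖x * a - a * x‖ < δ →
        ‖x * CFC.sqrt a - CFC.sqrt a * x‖ < ε := by
  intro ε hε
  obtain ⟨q, hq⟩ := exists_polynomial_near_of_continuousOn 0 1 Real.sqrt
    Real.continuous_sqrt.continuousOn (ε / 5) (by positivity)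
  set M : ℝ := ∑ i ∈ Finset.range (q.natDegree + 1), |q.coeff i| * i with hM
  have hM0 : 0 ≤ M := Finset.sum_nonneg fun i _ => by positivity
  refine ⟨ε / (2 * (M + 1)), by positivity, ?_⟩
  intro A _ _ _ a x ha ha1 hx1 hcomm
  set B := Unitization ℂ A
  set b : B := (a : B) with hbdef
  set y : B := (x : B) with hydef
  have hb : (0 : B) ≤ b := Unitization.inr_nonneg_iff.mpr ha
  have hb1 : ‖b‖ ≤ 1 := by rwa [hbdef, Unitization.norm_inr]
  have hy1 : ‖y‖ ≤ 1 := by rwa [hydef, Unitization.norm_inr]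
  have hsqrt : ((CFC.sqrt a : A) : B) = CFC.sqrt b := by
    refine (CFC.sqrt_unique ?_ ?_).symm
    · rw [← Unitization.inr_mul, CFC.sqrt_mul_sqrt_self a ha]
    · exact Unitization.inr_nonneg_iff.mpr (CFC.sqrt_nonneg a)
  have hd : ‖y * b - b * y‖ < ε / (2 * (M + 1)) := by
    rw [hbdef, hydef, ← Unitization.inr_mul, ← Unitization.inr_mul,
      ← Unitization.inr_sub, Unitization.norm_inr]
    exact hcomm
  have hgoal : ‖x * CFC.sqrt a - CFC.sqrt a * x‖
      = ‖y * CFC.sqrt b - CFC.sqrt b * y‖ := by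
    rw [← hsqrt, hydef, ← Unitization.inr_mul, ← Unitization.inr_mul,
      ← Unitization.inr_sub, Unitization.norm_inr]
  rw [hgoal]
  set s : B := CFC.sqrt b with hsdef
  set P : B := aeval b q with hPdef
  -- spectrum is in [0,1]
  have hspec : spectrum ℝ b ⊆ Set.Icc 0 1 := by
    intro t ht
    refine ⟨spectrum_nonneg_of_nonneg hb ht, ?_⟩
    have h1 : ‖t‖ ≤ ‖b‖ := spectrum.norm_le_norm_of_mem ht
    rw [Real.norm_eq_abs] at h1
    linarith [le_abs_self t]
  have hs_cfc : s = cfc Real.sqrt b := by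
    rw [hsdef, CFC.sqrt_eq_cfc, cfc_nnreal_eq_real _ b hb]
    congr 1
    funext t
    rw [Real.sqrt]
  have hnear : ‖s - P‖ ≤ ε / 5 := by
    rw [hs_cfc, hPdef, ← cfc_polynomial q b, ← cfc_sub (fun t => Real.sqrt t) q.eval b]
    refine norm_cfc_le (by positivity) fun t ht => ?_
    have := hq t (hspec ht)
    rw [Real.norm_eq_abs, abs_sub_comm]
    linarith
  have hP : ‖y * P - P * y‖ ≤ M * ‖y * b - b * y‖ := by
    rw [hPdef, Polynomial.aeval_eq_sum_range, Finset.mul_sum, Finset.sum_mul,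
      ← Finset.sum_sub_distrib]
    refine (norm_sum_le _ _).trans ?_
    rw [hM, Finset.sum_mul]
    refine Finset.sum_le_sum fun i _ => ?_
    have hre : y * (q.coeff i • b ^ i) - (q.coeff i • b ^ i) * y
        = q.coeff i • (y * b ^ i - b ^ i * y) := by
      rw [mul_smul_comm, smul_mul_assoc, smul_sub]
    rw [hre, norm_smul, Real.norm_eq_abs]
    calc |q.coeff i| * ‖y * b ^ i - b ^ i * y‖
        ≤ |q.coeff i| * (i * ‖y * b - b * y‖) := by
          gcongr
          exact comm_pow_bound_aux b y hb1 i
      _ = |q.coeff i| * i * ‖y * b - b * y‖ := by ring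
  have hdec : y * s - s * y = (y * (s - P) - (s - P) * y) + (y * P - P * y) := by
    simp only [mul_sub, sub_mul]; abel
  have hMd : M * ‖y * b - b * y‖ ≤ ε / 2 := by
    have h1 : M * ‖y * b - b * y‖ ≤ M * (ε / (2 * (M + 1))) :=
      mul_le_mul_of_nonneg_left hd.le hM0
    have h2 : M * (ε / (2 * (M + 1))) ≤ ε / 2 := by
      rw [mul_div_assoc', div_le_div_iff₀ (by positivity) (by norm_num : (0:ℝ) < 2)]
      nlinarith
    linarith
  calc ‖y * s - s * y‖
      ≤ ‖y * (s - P) - (s - P) * y‖ + ‖y * P - P * y‖ := by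
        rw [hdec]; exact norm_add_le _ _
    _ ≤ (‖y‖ * ‖s - P‖ + ‖s - P‖ * ‖y‖) + M * ‖y * b - b * y‖ := by
        gcongr
        exact (norm_sub_le _ _).trans (by gcongr <;> [exact norm_mul_le _ _; exact norm_mul_le _ _])
    _ ≤ (1 * (ε / 5) + (ε / 5) * 1) + ε / 2 := by
        gcongr
    _ < ε := by linarith
end

section
/- Let D be a unital C*-algebra that contains two isometries s, t with s*t = 0, and suppose D contains a unital copy of the Cuntz algebra O₂. Let p, q ∈ D be projections such that there exist isometries s₁, s₂ ∈ D with s₁s₁* ≤ p and s₂s₂* ≤ 1 − p, and isometries t₁, t₂ ∈ D with t₁t₁* ≤ q and t₂t₂* ≤ 1 − q, such that [p]₀ = 0 and [q]₀ = 0 in K₀(D). If moreover there exist isometries r₁, r₂ ∈ D with r₁r₁* ≤ p, r₂r₂* ≤ q and ‖r₁*r₂‖ < 1, then p and q are homotopic in the set of projections of D. -/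
/-- A projection in a *-ring. -/
def IsProjectionElem {D : Type*} [Mul D] [Star D] (p : D) : Prop :=
  p * p = p ∧ star p = p

/-- Murray–von Neumann equivalence: `p = v* v` and `q = v v*`. -/
def MvNEquiv {D : Type*} [Mul D] [Star D] (p q : D) : Prop :=
  ∃ v : D, star v * v = p ∧ v * star v = q

/-- Two projections are homotopic if they are joined by a norm-continuous path of
projections. -/
def ProjHomotopic {D : Type*} [TopologicalSpace D] [Mul D] [Star D] (p q : D) : Prop :=
  ∃ f : C(unitInterval, D), (∀ t, IsProjectionElem (f t)) ∧ f 0 = p ∧ f 1 = q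

/-- A unitary element of a unital *-ring. -/
def IsUnitaryElem {D : Type*} [Monoid D] [Star D] (u : D) : Prop :=
  star u * u = 1 ∧ u * star u = 1

/-- Two unitaries are homotopic if they are joined by a norm-continuous path of
unitaries; `UnitaryHomotopic u 1` says `u ∈ U₀(D)`. -/
def UnitaryHomotopic {D : Type*} [TopologicalSpace D] [Monoid D] [Star D] (u v : D) : Prop :=
  ∃ f : C(unitInterval, D), (∀ t, IsUnitaryElem (f t)) ∧ f 0 = u ∧ f 1 = v

/-- The class of a projection `p ∈ D` vanishes in `K₀(D)`: after adding a suitable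
`1ₙ`, `p ⊕ 1ₙ` is Murray–von Neumann equivalent to `0 ⊕ 1ₙ` in `M_{n+1}(D)`. -/
def K0ElemClassZero {D : Type*} [Ring D] [StarRing D] (p : D) : Prop :=
  ∃ n : ℕ, MvNEquiv
    (Matrix.diagonal (fun i : Fin (n + 1) => if i = 0 then p else 1))
    (Matrix.diagonal (fun i : Fin (n + 1) => if i = 0 then 0 else 1))

/-- `K₀(D) = 0`: every projection over a matrix algebra of `D` has vanishing class. -/
def K0Trivial (D : Type*) [Ring D] [StarRing D] : Prop :=
  ∀ (k : ℕ) (P : Matrix (Fin k) (Fin k) D), IsProjectionElem P →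
    ∃ n : ℕ, MvNEquiv
      (Matrix.fromBlocks P 0 0 (1 : Matrix (Fin n) (Fin n) D))
      (Matrix.fromBlocks 0 0 0 (1 : Matrix (Fin n) (Fin n) D))

/-- `K₁(D) = 0`: every unitary matrix over `D` is, after stabilization by `1ₙ`,
homotopic to the identity through unitaries. -/
def K1Trivial (D : Type*) [Ring D] [StarRing D] [TopologicalSpace D] : Prop :=
  ∀ (k : ℕ) (U : Matrix (Fin k) (Fin k) D), IsUnitaryElem U →
    ∃ n : ℕ, UnitaryHomotopic
      (Matrix.fromBlocks U 0 0 (1 : Matrix (Fin n) (Fin n) D))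
      (1 : Matrix (Fin k ⊕ Fin n) (Fin k ⊕ Fin n) D)

/-- A splitting projection: a projection `p` dominating the range projection of an
isometry and with `1 - p` dominating the range projection of an isometry. -/
def IsSplittingProjection {D : Type*} [Ring D] [StarRing D] [PartialOrder D] (p : D) : Prop :=
  IsProjectionElem p ∧ ∃ s t : D, star s * s = 1 ∧ star t * t = 1 ∧
    s * star s ≤ p ∧ t * star t ≤ 1 - p

/-- `D` is `K₁`-injective: the canonical map `U(D)/U₀(D) → K₁(D)` is injective, i.e.
a unitary of `D` which becomes connected to `1` after stabilizing by a `1ₙ` is already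
in `U₀(D)`. -/
def K1Injective (D : Type*) [Ring D] [StarRing D] [TopologicalSpace D] : Prop :=
  ∀ u : D, IsUnitaryElem u →
    (∃ n : ℕ, UnitaryHomotopic
      (Matrix.diagonal (fun i : Fin (n + 1) => if i = 0 then u else 1))
      (1 : Matrix (Fin (n + 1)) (Fin (n + 1)) D)) →
    UnitaryHomotopic u (1 : D)

/-!
Write `[x]` for the range projection `x x*` of an isometry `x`. Since `[p]₀ = 0`, compressing the
equivalence `p ⊕ 1ₙ ~ 0 ⊕ 1ₙ` along a Cuntz family `u₁, u₂w₁, …, u₂wₙ` built from `O₂` gives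
`u₁pu₁* + [u₂] ~ [u₂] ~ 1`, and an isometry below `p` absorbs the summand `[u₂]`; hence `p = [a]`
and likewise `q = [b]` for isometries `a`, `b`. A path of isometries from `x` to `y` is a homotopy
`[x] ≃ [y]`, so it remains to join `a` to `b` within the isometries. Isometries with orthogonal
ranges are joined by `cos θ • x + sin θ • y`, and the polar parts of `r₂ - t r₁r₁*r₂`, `t ∈ [0, 1]`,
join `r₂` to an isometry `W` with `r₁* W = 0` because `‖r₁* r₂‖ < 1`. The chain is
`a — s₂ — r₁ — W — r₂ — t₂ — b`.
-/

section StarRing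

variable {A : Type*} [Ring A] [StarRing A]

lemma IsStarProjection.isometry_conj {P u : A} (hP : IsStarProjection P) (hu : star u * u = 1) :
    IsStarProjection (u * P * star u) := by
  refine isStarProjection_iff'.mpr ⟨?_, by simp [mul_assoc, hP.isSelfAdjoint.star_eq]⟩
  calc u * P * star u * (u * P * star u) = u * (P * (star u * u) * P) * star u := by
        simp only [mul_assoc]
    _ = u * P * star u := by rw [hu, mul_one, hP.isIdempotentElem.eq, mul_assoc]

lemma isStarProjection_mul_star_of_isometry {u : A} (hu : star u * u = 1) :
    IsStarProjection (u * star u) := by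
  simpa using (IsStarProjection.one A).isometry_conj hu

namespace MvNEquiv

variable {P Q R : A}

lemma symm (h : MvNEquiv P Q) : MvNEquiv Q P := by
  obtain ⟨v, hP, hQ⟩ := h
  exact ⟨star v, by rwa [star_star], by rwa [star_star]⟩

lemma trans (hP : IsIdempotentElem P) (hR : IsIdempotentElem R) (h : MvNEquiv P Q)
    (h' : MvNEquiv Q R) : MvNEquiv P R := by
  obtain ⟨v, hvP, hvQ⟩ := h
  obtain ⟨w, hwQ, hwR⟩ := h'
  refine ⟨w * v, ?_, ?_⟩
  · calc star (w * v) * (w * v) = star v * (star w * w) * v := by simp only [star_mul, mul_assoc]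
      _ = (star v * v) * (star v * v) := by rw [hwQ, ← hvQ]; simp only [mul_assoc]
      _ = P := by rw [hvP, hP.eq]
  · calc w * v * star (w * v) = w * (v * star v) * star w := by simp only [star_mul, mul_assoc]
      _ = (w * star w) * (w * star w) := by rw [hvQ, ← hwQ]; simp only [mul_assoc]
      _ = R := by rw [hwR, hR.eq]

end MvNEquiv

lemma mvnEquiv_isometry_conj {P u : A} (hP : IsStarProjection P) (hu : star u * u = 1) :
    MvNEquiv P (u * P * star u) :=
  ⟨u * P, by rw [star_mul, mul_assoc, ← mul_assoc (star u), hu, one_mul, hP.isSelfAdjoint.star_eq,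
    hP.isIdempotentElem.eq], by rw [star_mul, hP.isSelfAdjoint.star_eq, mul_assoc, ← mul_assoc P,
    hP.isIdempotentElem.eq, mul_assoc]⟩

lemma mvnEquiv_sub_conj_one_sub {p s u : A} (hp : IsStarProjection p) (hs : star s * s = 1)
    (hps : p * s = s) (hu : star u * u = 1) :
    MvNEquiv p (p - s * (1 - u * star u) * star s) := by
  have hsp : star s * p = star s := by simpa [hp.isSelfAdjoint.star_eq] using congr(star $hps)
  have hpp := hp.isIdempotentElem.eq
  refine ⟨p - s * star s + s * u * star s, ?_, ?_⟩
  · simp only [star_add, star_sub, star_mul, star_star, hp.isSelfAdjoint.star_eq, add_mul, sub_mul,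
      mul_add, mul_sub, mul_assoc, ← mul_assoc p s, hpp, hps, hsp, hs,
      ← mul_assoc (star s) s, one_mul, ← mul_assoc (star u) u, hu]
    abel
  · simp only [star_add, star_sub, star_mul, star_star, hp.isSelfAdjoint.star_eq, add_mul, sub_mul,
      mul_add, mul_sub, mul_assoc, ← mul_assoc p s, hpp, hps, hsp, hs,
      ← mul_assoc (star s) s, one_mul]
    abel

open Matrix in
lemma MvNEquiv.sum_conj_diagonal {ι : Type*} [Fintype ι] [DecidableEq ι] {v : ι → A}
    (hv : ∀ i j, star (v i) * v j = if i = j then 1 else 0) {f g : ι → A}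
    (h : MvNEquiv (diagonal f) (diagonal g)) :
    MvNEquiv (∑ i, v i * f i * star (v i)) (∑ i, v i * g i * star (v i)) := by
  obtain ⟨V, hVf, hVg⟩ := h
  let R : Matrix (Fin 1) ι A := of fun _ i => v i
  have hR : Rᴴ * R = 1 := by
    ext i j
    simp [R, mul_apply, one_apply, hv]
  have hmul (M N : Matrix ι ι A) :
      (R * M * Rᴴ) 0 0 * (R * N * Rᴴ) 0 0 = (R * (M * N) * Rᴴ) 0 0 := by
    have h1 : ∀ X Y : Matrix (Fin 1) (Fin 1) A, X 0 0 * Y 0 0 = (X * Y) 0 0 := by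
      simp [mul_apply]
    rw [h1]
    simp only [Matrix.mul_assoc]
    rw [← Matrix.mul_assoc Rᴴ, hR, Matrix.one_mul]
  have hstar (M : Matrix ι ι A) : star ((R * M * Rᴴ) 0 0) = (R * Mᴴ * Rᴴ) 0 0 := by
    rw [← conjTranspose_apply, conjTranspose_mul, conjTranspose_mul, conjTranspose_conjTranspose,
      Matrix.mul_assoc]
  have hdiag (f : ι → A) : (R * diagonal f * Rᴴ) 0 0 = ∑ i, v i * f i * star (v i) := by
    simp [R, mul_apply, diagonal_apply, mul_ite]
  refine ⟨(R * V * Rᴴ) 0 0, ?_, ?_⟩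
  · rw [hstar, hmul, ← star_eq_conjTranspose, hVf, hdiag]
  · rw [hstar, hmul, ← star_eq_conjTranspose, hVg, hdiag]

structure IsCuntzFamily {ι : Type*} [Fintype ι] [DecidableEq ι] (v : ι → A) : Prop where
  star_mul_eq : ∀ i j, star (v i) * v j = if i = j then 1 else 0
  sum_mul_star_eq : ∑ i, v i * star (v i) = 1

lemma IsCuntzFamily.sum_mul_left_mul_star {ι : Type*} [Fintype ι] [DecidableEq ι] {v : ι → A}
    (hv : IsCuntzFamily v) (u : A) : ∑ i, u * v i * star (u * v i) = u * star u :=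
  calc ∑ i, u * v i * star (u * v i) = u * (∑ i, v i * star (v i)) * star u := by
        simp only [star_mul, Finset.mul_sum, Finset.sum_mul, mul_assoc]
    _ = u * star u := by rw [hv.sum_mul_star_eq, mul_one]

lemma isCuntzFamily_pair {u₁ u₂ : A} (hu₁ : star u₁ * u₁ = 1) (hu₂ : star u₂ * u₂ = 1)
    (hO₂ : u₁ * star u₁ + u₂ * star u₂ = 1) : IsCuntzFamily ![u₁, u₂] := by
  have h12 : star u₁ * u₂ = 0 := by
    have h : star u₁ * u₂ + star u₁ * u₂ = star u₁ * u₂ := by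
      calc star u₁ * u₂ + star u₁ * u₂
          = (star u₁ * u₁) * (star u₁ * u₂) + (star u₁ * u₂) * (star u₂ * u₂) := by
            rw [hu₁, hu₂, one_mul, mul_one]
        _ = star u₁ * ((u₁ * star u₁ + u₂ * star u₂) * u₂) := by
            simp only [add_mul, mul_add, mul_assoc]
        _ = star u₁ * u₂ := by rw [hO₂, one_mul]
    simpa using h
  have h21 : star u₂ * u₁ = 0 := by simpa using congr(star $h12)
  refine ⟨?_, by simpa using hO₂⟩
  simp [Fin.forall_fin_two, hu₁, hu₂, h12, h21]

lemma IsCuntzFamily.cons {u₁ u₂ : A} (hu : IsCuntzFamily ![u₁, u₂]) {n : ℕ} {v : Fin n → A}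
    (hv : IsCuntzFamily v) : IsCuntzFamily (Fin.cons u₁ fun i => u₂ * v i : Fin (n + 1) → A) := by
  have h11 : star u₁ * u₁ = 1 := by simpa using hu.star_mul_eq 0 0
  have h12 : star u₁ * u₂ = 0 := by simpa using hu.star_mul_eq 0 1
  have h21 : star u₂ * u₁ = 0 := by simpa using hu.star_mul_eq 1 0
  have h22 : star u₂ * u₂ = 1 := by simpa using hu.star_mul_eq 1 1
  refine ⟨fun i j => ?_, ?_⟩
  · cases i using Fin.cases <;> cases j using Fin.cases
    · simp [h11]
    · simp [← mul_assoc, h12, (Fin.succ_ne_zero _).symm]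
    · simp [mul_assoc, h21, Fin.succ_ne_zero]
    · simp [mul_assoc, ← mul_assoc (star u₂), h22, hv.star_mul_eq]
  · rw [Fin.sum_univ_succ]
    simp only [Fin.cons_zero, Fin.cons_succ]
    rw [hv.sum_mul_left_mul_star]
    simpa using hu.sum_mul_star_eq

lemma exists_isCuntzFamily {u₁ u₂ : A} (hu : IsCuntzFamily ![u₁, u₂]) (n : ℕ) :
    ∃ v : Fin (n + 1) → A, IsCuntzFamily v := by
  induction n with
  | zero =>
    exact ⟨fun _ => 1, fun i j => by simp [Fin.fin_one_eq_zero i, Fin.fin_one_eq_zero j], by simp⟩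
  | succ n ih =>
    obtain ⟨v, hv⟩ := ih
    exact ⟨_, hu.cons hv⟩

lemma IsCuntzFamily.sum_cons_mul_ite_mul_star {n : ℕ} {v : Fin n → A} (hv : IsCuntzFamily v)
    (u₁ u₂ g : A) :
    ∑ i, (Fin.cons u₁ fun i => u₂ * v i : Fin (n + 1) → A) i * (if i = 0 then g else 1) *
        star ((Fin.cons u₁ fun i => u₂ * v i : Fin (n + 1) → A) i) =
      u₁ * g * star u₁ + u₂ * star u₂ := by
  rw [Fin.sum_univ_succ]
  simp only [Fin.cons_zero, Fin.cons_succ, if_pos, Fin.succ_ne_zero, if_false, mul_one]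
  rw [hv.sum_mul_left_mul_star]

end StarRing

section CStarRing

variable {A : Type*} [NonUnitalNormedRing A] [StarRing A] [CStarRing A]

lemma mul_star_mul_self_of_isIdempotentElem {x : A} (hx : IsIdempotentElem (star x * x)) :
    x * (star x * x) = x := by
  set P := star x * x
  rw [← sub_eq_zero, ← CStarRing.star_mul_self_eq_zero_iff]
  calc star (x * P - x) * (x * P - x) = P * P * P - P * P - P * P + P := by
        simp only [P, star_sub, star_mul, star_star, sub_mul, mul_sub, mul_assoc]; abel
    _ = 0 := by simp only [hx.eq, sub_self, zero_sub, neg_add_cancel]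

lemma star_mul_self_mul_star_of_isIdempotentElem {x : A} (hx : IsIdempotentElem (star x * x)) :
    star x * x * star x = star x := by
  simpa [star_mul, mul_assoc] using congr(star $(mul_star_mul_self_of_isIdempotentElem hx))

namespace MvNEquiv

variable {P Q P' Q' : A}

lemma add (hP : IsIdempotentElem P) (hP' : IsIdempotentElem P') (hPP' : P * P' = 0)
    (hQQ' : Q * Q' = 0) (h : MvNEquiv P Q) (h' : MvNEquiv P' Q') :
    MvNEquiv (P + P') (Q + Q') := by
  obtain ⟨v, rfl, rfl⟩ := h
  obtain ⟨w, rfl, rfl⟩ := h'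
  have hv := mul_star_mul_self_of_isIdempotentElem hP
  have hw := mul_star_mul_self_of_isIdempotentElem hP'
  have hvs := star_mul_self_mul_star_of_isIdempotentElem hP
  have hws := star_mul_self_mul_star_of_isIdempotentElem hP'
  have hvw : star v * w = 0 := by
    calc star v * w = star v * (v * star v * (w * star w)) * w := by
          simp only [← mul_assoc, hvs]; simp only [mul_assoc, hw]
      _ = 0 := by rw [hQQ', mul_zero, zero_mul]
  have hwv : v * star w = 0 := by
    calc v * star w = v * (star v * v * (star w * w)) * star w := by
          simp only [← mul_assoc, hv]; simp only [mul_assoc, hws]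
      _ = 0 := by rw [hPP', mul_zero, zero_mul]
  refine ⟨v + w, ?_, ?_⟩
  · have : star w * v = 0 := by simpa using congr(star $hvw)
    simp only [star_add, add_mul, mul_add, hvw, this]; abel
  · have : w * star v = 0 := by simpa using congr(star $hwv)
    simp only [star_add, add_mul, mul_add, hwv, this]; abel

lemma eq_zero (h : MvNEquiv P 0) : P = 0 := by
  obtain ⟨v, rfl, hv⟩ := h
  rw [(CStarRing.mul_star_self_eq_zero_iff v).mp hv, mul_zero]

end MvNEquiv

end CStarRing

section K0

variable {A : Type*} [NormedRing A] [StarRing A] [CStarRing A]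

lemma mvnEquiv_conj_add_mul_star {u₁ u₂ p s : A} (hu : IsCuntzFamily ![u₁, u₂])
    (hp : IsStarProjection p) (hs : star s * s = 1) (hps : p * s = s) :
    MvNEquiv (u₁ * p * star u₁ + u₂ * star u₂) p := by
  have hu₁ : star u₁ * u₁ = 1 := by simpa using hu.star_mul_eq 0 0
  have hu₂ : star u₂ * u₂ = 1 := by simpa using hu.star_mul_eq 1 1
  have h12 : star u₁ * u₂ = 0 := by simpa using hu.star_mul_eq 0 1
  have hO₂ : 1 - u₁ * star u₁ = u₂ * star u₂ := by
    rw [sub_eq_iff_eq_add', ← hu.sum_mul_star_eq]; simp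
  have hsp : star s * p = star s := by simpa [hp.isSelfAdjoint.star_eq] using congr(star $hps)
  have hE := isStarProjection_mul_star_of_isometry hu₂
  have hsE := hE.isometry_conj hs
  have hpE : IsStarProjection (p - s * (u₂ * star u₂) * star s) :=
    hsE.sub_of_mul_eq_left hp (by simp only [mul_assoc, hsp])
  have hcorner : MvNEquiv (u₁ * p * star u₁) (p - s * (u₂ * star u₂) * star s) :=
    ((mvnEquiv_isometry_conj hp hu₁).symm.trans (hp.isometry_conj hu₁).isIdempotentElem
      hpE.isIdempotentElem) (hO₂ ▸ mvnEquiv_sub_conj_one_sub hp hs hps hu₁)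
  have hsum := hcorner.add (hp.isometry_conj hu₁).isIdempotentElem hE.isIdempotentElem
    (by simp only [mul_assoc, ← mul_assoc (star u₁) u₂, h12, zero_mul, mul_zero]) ?_
    (mvnEquiv_isometry_conj hE hs)
  · rwa [sub_add_cancel] at hsum
  · rw [sub_mul, hsE.isIdempotentElem.eq, sub_eq_zero]
    simp only [← mul_assoc, hps]

lemma mvnEquiv_one_of_k0ElemClassZero {u₁ u₂ p s : A} (hu : IsCuntzFamily ![u₁, u₂])
    (hp : IsStarProjection p) (hs : star s * s = 1) (hps : p * s = s) (hK : K0ElemClassZero p) :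
    MvNEquiv 1 p := by
  obtain ⟨n, hn⟩ := hK
  cases n with
  | zero =>
    have h : MvNEquiv p 0 := by
      simpa using hn.sum_conj_diagonal (v := fun _ => 1)
        (fun i j => by simp [Fin.fin_one_eq_zero i, Fin.fin_one_eq_zero j])
    have : Subsingleton A := subsingleton_of_zero_eq_one (by rw [← hs, ← hps, h.eq_zero]; simp)
    exact ⟨0, Subsingleton.elim _ _, Subsingleton.elim _ _⟩
  | succ m =>
    obtain ⟨w, hw⟩ := exists_isCuntzFamily hu m
    have h := hn.sum_conj_diagonal (hu.cons hw).star_mul_eq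
    rw [hw.sum_cons_mul_ite_mul_star, hw.sum_cons_mul_ite_mul_star, mul_zero, zero_mul,
      zero_add] at h
    have hu₂ : star u₂ * u₂ = 1 := by simpa using hu.star_mul_eq 1 1
    have hE := (isStarProjection_mul_star_of_isometry hu₂).isIdempotentElem
    exact MvNEquiv.trans IsIdempotentElem.one hp.isIdempotentElem ⟨u₂, hu₂, rfl⟩
      (h.symm.trans hE hp.isIdempotentElem (mvnEquiv_conj_add_mul_star hu hp hs hps))

end K0

def isometries (A : Type*) [Mul A] [One A] [Star A] : Set A := {v | star v * v = 1}

lemma ProjHomotopic.of_joinedIn_isometries {A : Type*} [Monoid A] [StarMul A] [TopologicalSpace A]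
    [ContinuousMul A] [ContinuousStar A] {x y : A} (h : JoinedIn (isometries A) x y) :
    ProjHomotopic (x * star x) (y * star y) := by
  obtain ⟨γ, hγ⟩ := h
  refine ⟨⟨fun t => γ t * star (γ t), by fun_prop⟩, fun t => ⟨?_, ?_⟩, by simp, by simp⟩
  · simp only [ContinuousMap.coe_mk]
    rw [mul_assoc, ← mul_assoc (star (γ t)), hγ t, one_mul]
  · simp

section CStarAlgebra

variable {A : Type*} [CStarAlgebra A]

open Real in
lemma joinedIn_isometries_of_star_mul_eq_zero {x y : A} (hx : star x * x = 1)
    (hy : star y * y = 1) (hxy : star x * y = 0) : JoinedIn (isometries A) x y := by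
  have hyx : star y * x = 0 := by simpa using congr(star $hxy)
  let γ : Path x y :=
    { toFun t := cos (π / 2 * t) • x + sin (π / 2 * t) • y
      continuous_toFun := by fun_prop
      source' := by simp
      target' := by simp }
  refine ⟨γ, fun t => ?_⟩
  show star (γ t) * γ t = 1
  simp only [γ, Path.coe_mk_mk, star_add, star_smul, star_trivial, add_mul, mul_add,
    smul_mul_smul_comm, hx, hy, hxy, hyx, smul_zero, add_zero, zero_add]
  rw [← add_smul, ← sq, ← sq, cos_sq_add_sin_sq, one_smul]

lemma joinedIn_isometries_of_mul_eq_self_of_mul_eq_zero {f x y : A} (hf : IsSelfAdjoint f)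
    (hx : star x * x = 1) (hy : star y * y = 1) (hfx : f * x = x) (hfy : f * y = 0) :
    JoinedIn (isometries A) x y :=
  joinedIn_isometries_of_star_mul_eq_zero hx hy
    (by rw [← hfx, star_mul, hf.star_eq, mul_assoc, hfy, mul_zero])

variable [PartialOrder A] [StarOrderedRing A]

lemma IsStarProjection.mul_eq_self_of_mul_star_le {p v : A} (hp : IsStarProjection p)
    (hv : star v * v = 1) (h : v * star v ≤ p) : p * v = v := by
  have hpv := (hp.mul_right_and_mul_left_of_nonneg_of_le (mul_star_self_nonneg v) h).2
  calc p * v = p * (v * star v) * v := by rw [mul_assoc, mul_assoc, hv, mul_one]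
    _ = v := by rw [hpv, mul_assoc, hv, mul_one]

lemma IsStarProjection.mul_eq_zero_of_mul_star_le_one_sub {p v : A} (hp : IsStarProjection p)
    (hv : star v * v = 1) (h : v * star v ≤ 1 - p) : p * v = 0 := by
  simpa [sub_mul] using hp.one_sub.mul_eq_self_of_mul_star_le hv h

noncomputable def polarPart (y : A) : A := y * (star y * y) ^ (-(1 / 2) : ℝ)

lemma star_polarPart_mul_self {y : A} (hy : IsUnit (star y * y)) :
    star (polarPart y) * polarPart y = 1 := by
  have hpos : IsStrictlyPositive (star y * y) := hy.isStrictlyPositive (star_mul_self_nonneg y)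
  rw [polarPart, star_mul, CFC.rpow_nonneg.star_eq, mul_assoc, ← mul_assoc (star y),
    ← mul_assoc]
  exact CFC.conjugate_rpow_neg_one_half _ hpos

lemma polarPart_of_star_mul_self {y : A} (hy : star y * y = 1) : polarPart y = y := by
  rw [polarPart, hy, CFC.one_rpow, mul_one]

lemma continuousOn_polarPart : ContinuousOn polarPart {y : A | IsUnit (star y * y)} := by
  refine continuousOn_id.mul ((CFC.continuousOn_rpow _).comp (by fun_prop) fun y hy => ?_)
  exact hy.isStrictlyPositive (star_mul_self_nonneg y)

lemma exists_joinedIn_isometries_of_norm_star_mul_lt_one {r w : A} (hr : star r * r = 1)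
    (hw : star w * w = 1) (hrw : ‖star r * w‖ < 1) :
    ∃ W, star W * W = 1 ∧ star r * W = 0 ∧ JoinedIn (isometries A) w W := by
  set x := star r * w
  let Y : unitInterval → A := fun t => w - (t : ℝ) • (r * x)
  have hY : Continuous Y := by fun_prop
  have hYY (t : unitInterval) : star (Y t) * Y t = 1 - (2 * t - t ^ 2 : ℝ) • (star x * x) := by
    have hxx : star x * x = star w * (r * star r) * w := by
      simp only [x, star_mul, star_star, mul_assoc]
    rw [hxx]
    simp only [Y, x, star_sub, star_smul, star_trivial, star_mul, star_star, sub_mul, mul_sub,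
      smul_mul_assoc, mul_smul_comm, mul_assoc]
    rw [← mul_assoc (star r) r, hr, one_mul, hw]
    module
  have hunit (t : unitInterval) : IsUnit (star (Y t) * Y t) := by
    rw [hYY]
    refine isUnit_one_sub_of_norm_lt_one ?_
    rw [norm_smul, CStarRing.norm_star_mul_self, Real.norm_eq_abs]
    have h0 : 0 ≤ 2 * (t : ℝ) - t ^ 2 := by nlinarith [t.2.1, t.2.2]
    have h1 : 2 * (t : ℝ) - t ^ 2 ≤ 1 := by nlinarith [t.2.1, t.2.2]
    rw [abs_of_nonneg h0]
    calc (2 * (t : ℝ) - t ^ 2) * (‖x‖ * ‖x‖) ≤ ‖x‖ * ‖x‖ := by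
          nlinarith [mul_self_nonneg ‖x‖]
      _ < 1 := by nlinarith [norm_nonneg x]
  let γ : Path (polarPart (Y 0)) (polarPart (Y 1)) :=
    { toFun t := polarPart (Y t)
      continuous_toFun := continuousOn_polarPart.comp_continuous hY hunit
      source' := rfl
      target' := rfl }
  refine ⟨polarPart (Y 1), star_polarPart_mul_self (hunit 1), ?_, ?_⟩
  · simp [polarPart, Y, ← mul_assoc, mul_sub, hr, x]
  · have hY0 : polarPart (Y 0) = w := by simp [Y, polarPart_of_star_mul_self hw]
    exact hY0 ▸ ⟨γ, fun t => star_polarPart_mul_self (hunit t)⟩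

end CStarAlgebra

theorem splitting_projections_homotopic_general
    (D : Type) [CStarAlgebra D] [PartialOrder D] [StarOrderedRing D]
    -- Cuntz standard form: a unital copy of O₂
    (u₁ u₂ : D) (hu₁ : star u₁ * u₁ = 1) (hu₂ : star u₂ * u₂ = 1)
    (hO₂ : u₁ * star u₁ + u₂ * star u₂ = 1)
    -- p and q are splitting projections
    (p q : D) (hp : IsProjectionElem p) (hq : IsProjectionElem q)
    (s₁ s₂ : D) (hs₁ : star s₁ * s₁ = 1) (hs₂ : star s₂ * s₂ = 1)
    (hs₁p : s₁ * star s₁ ≤ p) (hs₂p : s₂ * star s₂ ≤ 1 - p)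
    (t₁ t₂ : D) (ht₁ : star t₁ * t₁ = 1) (ht₂ : star t₂ * t₂ = 1)
    (ht₁q : t₁ * star t₁ ≤ q) (ht₂q : t₂ * star t₂ ≤ 1 - q)
    -- vanishing K₀-classes
    (hK0p : K0ElemClassZero p) (hK0q : K0ElemClassZero q)
    -- the almost-orthogonality datum
    (r₁ r₂ : D) (hr₁ : star r₁ * r₁ = 1) (hr₂ : star r₂ * r₂ = 1)
    (hr₁p : r₁ * star r₁ ≤ p) (hr₂q : r₂ * star r₂ ≤ q)
    (hr : ‖star r₁ * r₂‖ < 1) :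
    ProjHomotopic p q := by
  have hp' : IsStarProjection p := isStarProjection_iff'.mpr hp
  have hq' : IsStarProjection q := isStarProjection_iff'.mpr hq
  have hu := isCuntzFamily_pair hu₁ hu₂ hO₂
  obtain ⟨a, ha, hap⟩ := mvnEquiv_one_of_k0ElemClassZero hu hp' hs₁
    (hp'.mul_eq_self_of_mul_star_le hs₁ hs₁p) hK0p
  obtain ⟨b, hb, hbq⟩ := mvnEquiv_one_of_k0ElemClassZero hu hq' ht₁
    (hq'.mul_eq_self_of_mul_star_le ht₁ ht₁q) hK0q
  obtain ⟨W, hW, hr₁W, hr₂W⟩ := exists_joinedIn_isometries_of_norm_star_mul_lt_one hr₁ hr₂ hr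
  have hpa : p * a = a := by rw [← hap, mul_assoc, ha, mul_one]
  have hqb : q * b = b := by rw [← hbq, mul_assoc, hb, mul_one]
  have hps₂ := hp'.mul_eq_zero_of_mul_star_le_one_sub hs₂ hs₂p
  have hqt₂ := hq'.mul_eq_zero_of_mul_star_le_one_sub ht₂ ht₂q
  have hpr₁ := hp'.mul_eq_self_of_mul_star_le hr₁ hr₁p
  have hqr₂ := hq'.mul_eq_self_of_mul_star_le hr₂ hr₂q
  have h_as₂ := joinedIn_isometries_of_mul_eq_self_of_mul_eq_zero hp'.isSelfAdjoint ha hs₂ hpa hps₂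
  have h_r₁s₂ :=
    joinedIn_isometries_of_mul_eq_self_of_mul_eq_zero hp'.isSelfAdjoint hr₁ hs₂ hpr₁ hps₂
  have h_r₂t₂ :=
    joinedIn_isometries_of_mul_eq_self_of_mul_eq_zero hq'.isSelfAdjoint hr₂ ht₂ hqr₂ hqt₂
  have h_bt₂ := joinedIn_isometries_of_mul_eq_self_of_mul_eq_zero hq'.isSelfAdjoint hb ht₂ hqb hqt₂
  rw [← hap, ← hbq]
  exact .of_joinedIn_isometries <| h_as₂.trans h_r₁s₂.symm
    |>.trans (joinedIn_isometries_of_star_mul_eq_zero hr₁ hW hr₁W) |>.trans hr₂W.symm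
    |>.trans h_r₂t₂ |>.trans h_bt₂.symm

/-- Cuntz–Higson type lemma: in a properly infinite unital C*-algebra in
Cuntz standard form, two splitting projections `p`, `q` with vanishing `K₀`-classes which
dominate ranges of isometries `r₁`, `r₂` with `‖r₁* r₂‖ < 1` are homotopic. -/
theorem splitting_projections_homotopic
    (D : Type) [CStarAlgebra D] [PartialOrder D] [StarOrderedRing D]
    -- properly infinite: two isometries with orthogonal ranges
    (s t : D) (hs : star s * s = 1) (ht : star t * t = 1) (hst : star s * t = 0)
    -- Cuntz standard form: a unital copy of O₂
    (u₁ u₂ : D) (hu₁ : star u₁ * u₁ = 1) (hu₂ : star u₂ * u₂ = 1)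
    (hO₂ : u₁ * star u₁ + u₂ * star u₂ = 1)
    -- p and q are splitting projections
    (p q : D) (hp : IsProjectionElem p) (hq : IsProjectionElem q)
    (s₁ s₂ : D) (hs₁ : star s₁ * s₁ = 1) (hs₂ : star s₂ * s₂ = 1)
    (hs₁p : s₁ * star s₁ ≤ p) (hs₂p : s₂ * star s₂ ≤ 1 - p)
    (t₁ t₂ : D) (ht₁ : star t₁ * t₁ = 1) (ht₂ : star t₂ * t₂ = 1)
    (ht₁q : t₁ * star t₁ ≤ q) (ht₂q : t₂ * star t₂ ≤ 1 - q)
    -- vanishing K₀-classes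
    (hK0p : K0ElemClassZero p) (hK0q : K0ElemClassZero q)
    -- the almost-orthogonality datum
    (r₁ r₂ : D) (hr₁ : star r₁ * r₁ = 1) (hr₂ : star r₂ * r₂ = 1)
    (hr₁p : r₁ * star r₁ ≤ p) (hr₂q : r₂ * star r₂ ≤ q)
    (hr : ‖star r₁ * r₂‖ < 1) :
    ProjHomotopic p q :=
  splitting_projections_homotopic_general D u₁ u₂ hu₁ hu₂ hO₂ p q hp hq s₁ s₂ hs₁ hs₂ hs₁p hs₂p t₁
    t₂ ht₁ ht₂ ht₁q ht₂q hK0p hK0q r₁ r₂ hr₁ hr₂ hr₁p hr₂q hr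
end

section
/- Let D be a unital C*-algebra and suppose there exists a sequence of isometries (r_n) in D and an isometry r_∞ ∈ D with r₁r₁* + r_∞r_∞* = 1, such that for every x ∈ D the element x^∞ = Σ_{n≥1} r_n x r_n* converges (in a suitable topology making it an element of D) and satisfies x^∞ = r₁ x r₁* + r_∞ x^∞ r_∞*. Then the identity map on D induces the zero homomorphism on K₀(D) and K₁(D); in particular K₀(D) = 0 and K₁(D) = 0. -/
namespace Swindle

open Matrix

/-! ### Murray–von Neumann equivalence: generalities -/

section ElemMvN
variable {R : Type*} [Ring R] [StarRing R]

theorem mvn_refl (p : R) (hp : IsProjectionElem p) : MvNEquiv p p :=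
  ⟨p, by rw [hp.2, hp.1], by rw [hp.2, hp.1]⟩

theorem mvn_symm {p q : R} (h : MvNEquiv p q) : MvNEquiv q p := by
  obtain ⟨v, h1, h2⟩ := h
  exact ⟨star v, by rwa [star_star], by rwa [star_star]⟩

theorem mvn_trans {p q s : R} (hp : p * p = p) (hs : s * s = s)
    (h1 : MvNEquiv p q) (h2 : MvNEquiv q s) : MvNEquiv p s := by
  obtain ⟨v, hv1, hv2⟩ := h1
  obtain ⟨w, hw1, hw2⟩ := h2
  refine ⟨w * v, ?_, ?_⟩
  · calc star (w * v) * (w * v) = star v * (star w * w) * v := by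
          simp only [StarMul.star_mul, mul_assoc]
    _ = star v * (v * star v) * v := by rw [hw1, hv2]
    _ = (star v * v) * (star v * v) := by simp only [mul_assoc]
    _ = p := by rw [hv1, hp]
  · calc (w * v) * star (w * v) = w * (v * star v) * star w := by
          simp only [StarMul.star_mul, mul_assoc]
    _ = w * (star w * w) * star w := by rw [hv2, hw1]
    _ = (w * star w) * (w * star w) := by simp only [mul_assoc]
    _ = s := by rw [hw2, hs]

end ElemMvN

/-! ### Block matrix lemmas for MvN equivalence -/

section Blocks

set_option linter.unusedSectionVars false

variable {D : Type*} [Ring D] [StarRing D]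
variable {α β : Type*} [Fintype α] [Fintype β] [DecidableEq α] [DecidableEq β]

theorem star_fromBlocks' (A : Matrix α α D) (B : Matrix α β D) (C : Matrix β α D)
    (E : Matrix β β D) :
    star (fromBlocks A B C E) = fromBlocks (star A) Cᴴ Bᴴ (star E) := by
  simp [Matrix.star_eq_conjTranspose, fromBlocks_conjTranspose]

theorem proj_fromBlocks {p : Matrix α α D} {q : Matrix β β D}
    (hp : IsProjectionElem p) (hq : IsProjectionElem q) :
    IsProjectionElem (fromBlocks p 0 0 q) := by
  have hp2 : pᴴ = p := hp.2
  have hq2 : qᴴ = q := hq.2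
  constructor
  · simp [fromBlocks_multiply, hp.1, hq.1]
  · simp [Matrix.star_eq_conjTranspose, fromBlocks_conjTranspose, hp2, hq2]

theorem mvn_diag {p₁ q₁ : Matrix α α D} {p₂ q₂ : Matrix β β D}
    (h1 : MvNEquiv p₁ q₁) (h2 : MvNEquiv p₂ q₂) :
    MvNEquiv (fromBlocks p₁ 0 0 p₂) (fromBlocks q₁ 0 0 q₂) := by
  obtain ⟨v, hv1, hv2⟩ := h1
  obtain ⟨w, hw1, hw2⟩ := h2
  have hv1' : vᴴ * v = p₁ := hv1
  have hv2' : v * vᴴ = q₁ := hv2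
  have hw1' : wᴴ * w = p₂ := hw1
  have hw2' : w * wᴴ = q₂ := hw2
  refine ⟨fromBlocks v 0 0 w, ?_, ?_⟩ <;>
    simp [Matrix.star_eq_conjTranspose, fromBlocks_conjTranspose, fromBlocks_multiply,
      hv1', hv2', hw1', hw2']

theorem mvn_swap {p q : Matrix α α D} (hp : IsProjectionElem p) (hq : IsProjectionElem q) :
    MvNEquiv (fromBlocks p 0 0 q) (fromBlocks q 0 0 p) := by
  have hp2 : pᴴ = p := hp.2
  have hq2 : qᴴ = q := hq.2
  refine ⟨fromBlocks 0 q p 0, ?_, ?_⟩ <;>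
    simp [Matrix.star_eq_conjTranspose, fromBlocks_conjTranspose, fromBlocks_multiply,
      hp2, hq2, hp.1, hq.1]

theorem mvn_unit_split {e : Matrix α α D} (he : IsProjectionElem e) :
    MvNEquiv (fromBlocks e 0 0 (1 - e)) (fromBlocks 1 0 0 0) := by
  have he2 : eᴴ = e := he.2
  have h1 : e * (1 - e) = 0 := by rw [mul_sub, mul_one, he.1, sub_self]
  have h2 : (1 - e) * e = 0 := by rw [sub_mul, one_mul, he.1, sub_self]
  have h3 : (1 - e) * (1 - e) = 1 - e := by rw [sub_mul, one_mul, mul_sub, mul_one, he.1]; abel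
  have h4 : (1 - e)ᴴ = 1 - e := by
    rw [conjTranspose_sub, conjTranspose_one, he2]
  have h5 : e + (1 - e) = 1 := by abel
  refine ⟨fromBlocks e (1 - e) 0 0, ?_, ?_⟩ <;>
    simp [Matrix.star_eq_conjTranspose, fromBlocks_conjTranspose, fromBlocks_multiply,
      he2, h4, he.1, h1, h2, h3, h5]

/-- The swindle step: if `Q = S₁ P S₁* + S∞ Q S∞*`, then `P ⊕ Q ~ Q ⊕ 0`. -/
theorem mvn_swindle {S1 Si P Q : Matrix α α D}
    (hS1 : star S1 * S1 = 1) (hSi : star Si * Si = 1) (hOrth : star S1 * Si = 0)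
    (hP : IsProjectionElem P) (hQ : IsProjectionElem Q)
    (habs : Q = S1 * P * star S1 + Si * Q * star Si) :
    MvNEquiv (fromBlocks P 0 0 Q) (fromBlocks Q 0 0 0) := by
  have hOrth' : star Si * S1 = 0 := by
    have := congrArg star hOrth
    simpa [StarMul.star_mul] using this
  have hS1' : S1ᴴ * S1 = 1 := hS1
  have hSi' : Siᴴ * Si = 1 := hSi
  have hO : S1ᴴ * Si = 0 := hOrth
  have hO' : Siᴴ * S1 = 0 := hOrth'
  have hP2 : Pᴴ = P := hP.2
  have hQ2 : Qᴴ = Q := hQ.2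
  refine ⟨fromBlocks (S1 * P) (Si * Q) 0 0, ?_, ?_⟩
  · have e11 : Pᴴ * S1ᴴ * (S1 * P) = P := by
      calc Pᴴ * S1ᴴ * (S1 * P) = Pᴴ * (S1ᴴ * S1) * P := by simp only [mul_assoc]
      _ = P := by rw [hS1', hP2]; simp [hP.1]
    have e12 : Pᴴ * S1ᴴ * (Si * Q) = 0 := by
      calc Pᴴ * S1ᴴ * (Si * Q) = Pᴴ * (S1ᴴ * Si) * Q := by simp only [mul_assoc]
      _ = 0 := by rw [hO]; simp
    have e21 : Qᴴ * Siᴴ * (S1 * P) = 0 := by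
      calc Qᴴ * Siᴴ * (S1 * P) = Qᴴ * (Siᴴ * S1) * P := by simp only [mul_assoc]
      _ = 0 := by rw [hO']; simp
    have e22 : Qᴴ * Siᴴ * (Si * Q) = Q := by
      calc Qᴴ * Siᴴ * (Si * Q) = Qᴴ * (Siᴴ * Si) * Q := by simp only [mul_assoc]
      _ = Q := by rw [hSi', hQ2]; simp [hQ.1]
    simp [Matrix.star_eq_conjTranspose, fromBlocks_conjTranspose, conjTranspose_mul,
      fromBlocks_multiply, e11, e12, e21, e22]
  · have g1 : S1 * P * (Pᴴ * S1ᴴ) = S1 * P * S1ᴴ := by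
      calc S1 * P * (Pᴴ * S1ᴴ) = S1 * (P * Pᴴ) * S1ᴴ := by simp only [mul_assoc]
      _ = S1 * P * S1ᴴ := by rw [hP2, hP.1]
    have g2 : Si * Q * (Qᴴ * Siᴴ) = Si * Q * Siᴴ := by
      calc Si * Q * (Qᴴ * Siᴴ) = Si * (Q * Qᴴ) * Siᴴ := by simp only [mul_assoc]
      _ = Si * Q * Siᴴ := by rw [hQ2, hQ.1]
    have habs' : S1 * P * S1ᴴ + Si * Q * Siᴴ = Q := habs.symm
    simp [Matrix.star_eq_conjTranspose, fromBlocks_conjTranspose, conjTranspose_mul,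
      fromBlocks_multiply, g1, g2, habs']

theorem mvn_submatrix {γ : Type*} [Fintype γ] [DecidableEq γ] (e : γ ≃ α)
    {A B : Matrix α α D} (h : MvNEquiv A B) :
    MvNEquiv (A.submatrix e e) (B.submatrix e e) := by
  obtain ⟨v, h1, h2⟩ := h
  refine ⟨v.submatrix e e, ?_, ?_⟩
  · rw [Matrix.star_eq_conjTranspose, conjTranspose_submatrix,
      ← Matrix.star_eq_conjTranspose, submatrix_mul_equiv, h1]
  · rw [Matrix.star_eq_conjTranspose, conjTranspose_submatrix,
      ← Matrix.star_eq_conjTranspose, submatrix_mul_equiv, h2]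

theorem fromBlocks_assoc {γ : Type*} (a : Matrix α α D) (b : Matrix β β D) (c : Matrix γ γ D) :
    (fromBlocks (fromBlocks a 0 0 b) 0 0 c).submatrix
      (Equiv.sumAssoc α β γ).symm (Equiv.sumAssoc α β γ).symm
      = fromBlocks a 0 0 (fromBlocks b 0 0 c) := by
  ext i j
  rcases i with i | i | i <;> rcases j with j | j | j <;>
    simp [Matrix.submatrix_apply, Equiv.sumAssoc, Matrix.fromBlocks]

theorem fromBlocks_reindex_right {γ : Type*} [Fintype γ] [DecidableEq γ] (U : Matrix α α D) (e : γ ≃ β) :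
    (fromBlocks U 0 0 (1 : Matrix β β D)).submatrix
      (Sum.map id e) (Sum.map id e) = fromBlocks U 0 0 1 := by
  ext i j
  rcases i with i | i <;> rcases j with j | j <;>
    simp [Matrix.submatrix_apply, Matrix.fromBlocks, Matrix.one_apply,
      EmbeddingLike.apply_eq_iff_eq]

theorem big_eq {γ : Type*} (a : Matrix α α D) (b : Matrix β β D) (c : Matrix γ γ D) :
    fromBlocks (fromBlocks a 0 0 b) 0 0 c
      = (fromBlocks a 0 0 (fromBlocks b 0 0 c)).submatrix
          (Equiv.sumAssoc α β γ) (Equiv.sumAssoc α β γ) := by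
  conv_lhs => rw [← Matrix.submatrix_id_id (fromBlocks (fromBlocks a 0 0 b) 0 0 c)]
  rw [← fromBlocks_assoc a b c, Matrix.submatrix_submatrix]
  congr 1 <;> · funext x; simp

end Blocks

/-! ### Cancellation of a zero corner (uses positivity in the C*-algebra) -/

section Cancel

variable {D : Type} [CStarAlgebra D]
variable {α β : Type*} [Fintype α] [Fintype β]

theorem mvn_cancel_zero {x y : Matrix α α D}
    (h : MvNEquiv (fromBlocks x 0 0 (0 : Matrix β β D)) (fromBlocks y 0 0 0)) :
    MvNEquiv x y := by
  letI : PartialOrder D := CStarAlgebra.spectralOrder D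
  letI : StarOrderedRing D := CStarAlgebra.spectralOrderedRing D
  obtain ⟨v, h1, h2⟩ := h
  have h1' : vᴴ * v = fromBlocks x 0 0 0 := h1
  have h2' : v * vᴴ = fromBlocks y 0 0 0 := h2
  have hcol : ∀ (i : α ⊕ β) (j : β), v i (Sum.inr j) = 0 := by
    intro i j
    have hz : ∑ l : α ⊕ β, star (v l (Sum.inr j)) * v l (Sum.inr j) = 0 := by
      have := congrFun (congrFun h1' (Sum.inr j)) (Sum.inr j)
      simpa [Matrix.mul_apply, Matrix.conjTranspose_apply, Matrix.fromBlocks] using this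
    have := (Finset.sum_eq_zero_iff_of_nonneg (fun l _ => star_mul_self_nonneg _)).mp hz
      i (Finset.mem_univ i)
    exact (CStarRing.star_mul_self_eq_zero_iff _).mp this
  have hrow : ∀ (i : β) (j : α ⊕ β), v (Sum.inr i) j = 0 := by
    intro i j
    have hz : ∑ l : α ⊕ β, v (Sum.inr i) l * star (v (Sum.inr i) l) = 0 := by
      have := congrFun (congrFun h2' (Sum.inr i)) (Sum.inr i)
      simpa [Matrix.mul_apply, Matrix.conjTranspose_apply, Matrix.fromBlocks] using this
    have := (Finset.sum_eq_zero_iff_of_nonneg (fun l _ => mul_star_self_nonneg _)).mp hz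
      j (Finset.mem_univ j)
    exact (CStarRing.mul_star_self_eq_zero_iff _).mp this
  refine ⟨v.toBlocks₁₁, ?_, ?_⟩
  · ext i j
    have := congrFun (congrFun h1' (Sum.inl i)) (Sum.inl j)
    simp only [Matrix.mul_apply, Matrix.conjTranspose_apply, Matrix.fromBlocks,
      Sum.elim_inl, Matrix.of_apply] at this ⊢
    rw [← this, Fintype.sum_sum_type]
    simp [Matrix.toBlocks₁₁, hrow]
  · ext i j
    have := congrFun (congrFun h2' (Sum.inl i)) (Sum.inl j)
    simp only [Matrix.mul_apply, Matrix.conjTranspose_apply, Matrix.fromBlocks,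
      Sum.elim_inl, Matrix.of_apply] at this ⊢
    rw [← this, Fintype.sum_sum_type]
    simp [Matrix.toBlocks₁₁, hcol]

end Cancel

/-! ### The K₀ swindle -/

section K0core
variable {D : Type} [CStarAlgebra D]
variable {α : Type*} [Fintype α] [DecidableEq α]

/-- transported 3-block step -/
theorem step_left {a b a' b' c : Matrix α α D}
    (h : MvNEquiv (fromBlocks (fromBlocks a 0 0 b) 0 0 c)
                  (fromBlocks (fromBlocks a' 0 0 b') 0 0 c)) :
    MvNEquiv (fromBlocks a 0 0 (fromBlocks b 0 0 c) : Matrix (α ⊕ (α ⊕ α)) (α ⊕ (α ⊕ α)) D)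
             (fromBlocks a' 0 0 (fromBlocks b' 0 0 c)) := by
  have := mvn_submatrix (Equiv.sumAssoc α α α).symm h
  rwa [fromBlocks_assoc, fromBlocks_assoc] at this

theorem K0_core {S1 Si P Q : Matrix α α D}
    (hS1 : star S1 * S1 = 1) (hSi : star Si * Si = 1) (hOrth : star S1 * Si = 0)
    (hP : IsProjectionElem P) (hQ : IsProjectionElem Q)
    (habs : Q = S1 * P * star S1 + Si * Q * star Si) :
    MvNEquiv (fromBlocks P 0 0 (1 : Matrix α α D)) (fromBlocks 0 0 0 (1 : Matrix α α D)) := by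
  have p0 : IsProjectionElem (0 : Matrix α α D) := ⟨by simp, by simp⟩
  have p1 : IsProjectionElem (1 : Matrix α α D) := ⟨by simp, by simp⟩
  have pQ' : IsProjectionElem (1 - Q) := by
    constructor
    · rw [sub_mul, one_mul, mul_sub, mul_one, hQ.1]; abel
    · rw [star_sub, star_one, hQ.2]
  have s1 : MvNEquiv (fromBlocks P 0 0 (fromBlocks 1 0 0 0) : Matrix (α ⊕ (α ⊕ α)) (α ⊕ (α ⊕ α)) D)
      (fromBlocks P 0 0 (fromBlocks Q 0 0 (1 - Q))) :=
    mvn_diag (mvn_refl P hP) (mvn_symm (mvn_unit_split hQ))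
  have s2 : MvNEquiv (fromBlocks P 0 0 (fromBlocks Q 0 0 (1 - Q)) : Matrix (α ⊕ (α ⊕ α)) (α ⊕ (α ⊕ α)) D)
      (fromBlocks Q 0 0 (fromBlocks 0 0 0 (1 - Q))) :=
    step_left (mvn_diag (mvn_swindle hS1 hSi hOrth hP hQ habs) (mvn_refl _ pQ'))
  have s3 : MvNEquiv (fromBlocks Q 0 0 (fromBlocks 0 0 0 (1 - Q)) : Matrix (α ⊕ (α ⊕ α)) (α ⊕ (α ⊕ α)) D)
      (fromBlocks Q 0 0 (fromBlocks (1 - Q) 0 0 0)) :=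
    mvn_diag (mvn_refl Q hQ) (mvn_swap p0 pQ')
  have s4 : MvNEquiv (fromBlocks Q 0 0 (fromBlocks (1 - Q) 0 0 0) : Matrix (α ⊕ (α ⊕ α)) (α ⊕ (α ⊕ α)) D)
      (fromBlocks 1 0 0 (fromBlocks 0 0 0 0)) :=
    step_left (mvn_diag (mvn_unit_split hQ) (mvn_refl _ p0))
  have s5 : MvNEquiv (fromBlocks 0 0 0 (fromBlocks 1 0 0 0) : Matrix (α ⊕ (α ⊕ α)) (α ⊕ (α ⊕ α)) D)
      (fromBlocks 1 0 0 (fromBlocks 0 0 0 0)) :=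
    step_left (mvn_diag (mvn_swap p0 p1) (mvn_refl _ p0))
  have pd : ∀ (a b c : Matrix α α D), IsProjectionElem a → IsProjectionElem b →
      IsProjectionElem c →
      (fromBlocks a 0 0 (fromBlocks b 0 0 c) : Matrix (α ⊕ (α ⊕ α)) (α ⊕ (α ⊕ α)) D) *
        fromBlocks a 0 0 (fromBlocks b 0 0 c) = fromBlocks a 0 0 (fromBlocks b 0 0 c) :=
    fun a b c ha hb hc => (proj_fromBlocks ha (proj_fromBlocks hb hc)).1
  have m : MvNEquiv (fromBlocks P 0 0 (fromBlocks 1 0 0 0) : Matrix (α ⊕ (α ⊕ α)) (α ⊕ (α ⊕ α)) D)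
      (fromBlocks 0 0 0 (fromBlocks 1 0 0 0)) := by
    refine mvn_trans (pd _ _ _ hP p1 p0) (pd _ _ _ p0 p1 p0) s1 ?_
    refine mvn_trans (pd _ _ _ hP hQ pQ') (pd _ _ _ p0 p1 p0) s2 ?_
    refine mvn_trans (pd _ _ _ hQ p0 pQ') (pd _ _ _ p0 p1 p0) s3 ?_
    exact mvn_trans (pd _ _ _ hQ pQ' p0) (pd _ _ _ p0 p1 p0) s4 (mvn_symm s5)
  have mG := mvn_submatrix (Equiv.sumAssoc α α α) m
  rw [← big_eq, ← big_eq] at mG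
  exact mvn_cancel_zero mG

end K0core

/-! ### Unitary homotopy: generalities -/

section UH
set_option linter.unusedSectionVars false
variable {M : Type*} [Monoid M] [StarMul M] [TopologicalSpace M]
  [ContinuousMul M] [ContinuousStar M]

theorem unitary_mul {u v : M} (hu : IsUnitaryElem u) (hv : IsUnitaryElem v) :
    IsUnitaryElem (u * v) := by
  constructor
  · calc star (u * v) * (u * v) = star v * (star u * u) * v := by
          simp only [StarMul.star_mul, mul_assoc]
    _ = 1 := by rw [hu.1, mul_one, hv.1]
  · calc (u * v) * star (u * v) = u * (v * star v) * star u := by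
          simp only [StarMul.star_mul, mul_assoc]
    _ = 1 := by rw [hv.2, mul_one, hu.2]

theorem unitary_star {u : M} (hu : IsUnitaryElem u) : IsUnitaryElem (star u) :=
  ⟨by rw [star_star]; exact hu.2, by rw [star_star]; exact hu.1⟩

theorem unitary_one : IsUnitaryElem (1 : M) := ⟨by simp, by simp⟩

theorem uh_refl {u : M} (hu : IsUnitaryElem u) : UnitaryHomotopic u u :=
  ⟨ContinuousMap.const _ u, fun _ => hu, rfl, rfl⟩

theorem uh_symm {u v : M} (h : UnitaryHomotopic u v) : UnitaryHomotopic v u := by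
  obtain ⟨f, hf, h0, h1⟩ := h
  refine ⟨f.comp ⟨unitInterval.symm, unitInterval.continuous_symm⟩, fun t => hf _, ?_, ?_⟩
  · simpa [unitInterval.symm] using h1
  · simpa [unitInterval.symm] using h0

theorem uh_trans {u v w : M} (h1 : UnitaryHomotopic u v) (h2 : UnitaryHomotopic v w) :
    UnitaryHomotopic u w := by
  obtain ⟨f, hf, hf0, hf1⟩ := h1
  obtain ⟨g, hg, hg0, hg1⟩ := h2
  let p : Path u v := ⟨f, hf0, hf1⟩
  let q : Path v w := ⟨g, hg0, hg1⟩
  refine ⟨(p.trans q).toContinuousMap, fun t => ?_, (p.trans q).source, (p.trans q).target⟩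
  show IsUnitaryElem ((p.trans q) t)
  rw [Path.trans_apply]
  split_ifs
  · exact hf _
  · exact hg _

theorem uh_mul {u v u' v' : M} (h1 : UnitaryHomotopic u u') (h2 : UnitaryHomotopic v v') :
    UnitaryHomotopic (u * v) (u' * v') := by
  obtain ⟨f, hf, hf0, hf1⟩ := h1
  obtain ⟨g, hg, hg0, hg1⟩ := h2
  refine ⟨f * g, fun t => ?_, ?_, ?_⟩
  · simpa using unitary_mul (hf t) (hg t)
  · simp [hf0, hg0]
  · simp [hf1, hg1]

end UH

/-! ### Rotation homotopies (Whitehead lemma) for matrices over a C*-algebra -/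

section Rot
set_option linter.unusedSectionVars false
variable {D : Type} [CStarAlgebra D]
variable {α β : Type*} [Fintype α] [DecidableEq α] [Fintype β] [DecidableEq β]

theorem unitary_fromBlocks {a : Matrix α α D} {b : Matrix β β D}
    (ha : IsUnitaryElem a) (hb : IsUnitaryElem b) :
    IsUnitaryElem (fromBlocks a 0 0 b) := by
  constructor
  · rw [star_fromBlocks']
    simp [fromBlocks_multiply, ha.1, hb.1, ← fromBlocks_one]
  · rw [star_fromBlocks']
    simp [fromBlocks_multiply, ha.2, hb.2, ← fromBlocks_one]

/-- rotation by angle `t·π/2` as a `2×2` block scalar matrix -/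
noncomputable def Rot (t : ℝ) : Matrix (α ⊕ α) (α ⊕ α) D :=
  fromBlocks (((Real.cos (t * (Real.pi/2)) : ℂ)) • 1) (-(((Real.sin (t * (Real.pi/2)) : ℂ)) • 1))
    (((Real.sin (t * (Real.pi/2)) : ℂ)) • 1) (((Real.cos (t * (Real.pi/2)) : ℂ)) • 1)

theorem sst (a : ℝ) : star (((a : ℂ)) • (1 : Matrix α α D)) = ((a : ℂ)) • 1 := by
  rw [star_smul, star_one, Complex.star_def, Complex.conj_ofReal]

theorem Rot_zero : (Rot 0 : Matrix (α ⊕ α) (α ⊕ α) D) = 1 := by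
  simp [Rot, ← fromBlocks_one]

theorem Rot_one : (Rot 1 : Matrix (α ⊕ α) (α ⊕ α) D) = fromBlocks 0 (-1) 1 0 := by
  simp [Rot]

theorem Rot_unitary (t : ℝ) : IsUnitaryElem (Rot t : Matrix (α ⊕ α) (α ⊕ α) D) := by
  have pyth : Real.cos (t * (Real.pi/2)) * Real.cos (t * (Real.pi/2))
      + Real.sin (t * (Real.pi/2)) * Real.sin (t * (Real.pi/2)) = 1 := by
    rw [← Real.sin_sq_add_cos_sq (t * (Real.pi/2))]; ring
  set c := Real.cos (t * (Real.pi/2))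
  set s := Real.sin (t * (Real.pi/2))
  have pyth2 : s * s + c * c = 1 := by rw [← pyth]; ring
  have sm : ∀ a b : ℝ, (((a:ℂ)) • (1 : Matrix α α D)) * (((b:ℂ)) • 1) = (((a*b : ℝ) : ℂ)) • 1 := by
    intro a b; rw [smul_mul_smul_comm, one_mul]; norm_cast
  constructor <;>
  · rw [Rot, star_fromBlocks']
    simp only [conjTranspose_neg, ← Matrix.star_eq_conjTranspose, sst, fromBlocks_multiply]
    rw [← fromBlocks_one]
    congr 1 <;>
      (simp only [neg_mul, mul_neg, neg_neg, sm, ← neg_smul, ← add_smul,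
        ← Complex.ofReal_neg, ← Complex.ofReal_add]
       norm_cast
       simp +zetaDelta [smul_smul, ← add_smul, mul_comm, pyth, pyth2])

theorem continuous_Rot : Continuous fun t : ℝ => (Rot t : Matrix (α ⊕ α) (α ⊕ α) D) := by
  have hc : Continuous fun t : ℝ => ((Real.cos (t * (Real.pi/2)) : ℂ)) • (1 : Matrix α α D) :=
    (Complex.continuous_ofReal.comp (Real.continuous_cos.comp (by fun_prop))).smul
      continuous_const
  have hs : Continuous fun t : ℝ => ((Real.sin (t * (Real.pi/2)) : ℂ)) • (1 : Matrix α α D) :=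
    (Complex.continuous_ofReal.comp (Real.continuous_sin.comp (by fun_prop))).smul
      continuous_const
  apply continuous_pi; intro i; apply continuous_pi; intro j
  rcases i with i | i <;> rcases j with j | j <;>
    simp only [Rot, fromBlocks_apply₁₁, fromBlocks_apply₁₂, fromBlocks_apply₂₁,
      fromBlocks_apply₂₂]
  · exact (continuous_apply j).comp ((continuous_apply i).comp hc)
  · exact (continuous_apply j).comp ((continuous_apply i).comp hs.neg)
  · exact (continuous_apply j).comp ((continuous_apply i).comp hs)
  · exact (continuous_apply j).comp ((continuous_apply i).comp hc)

/-- Whitehead: `diag(ab, 1)` is homotopic to `diag(a, b)` through unitaries. -/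
theorem uh_whitehead {a b : Matrix α α D} (ha : IsUnitaryElem a) (hb : IsUnitaryElem b) :
    UnitaryHomotopic (fromBlocks (a * b) 0 0 1 : Matrix (α ⊕ α) (α ⊕ α) D)
      (fromBlocks a 0 0 b) := by
  set A : Matrix (α ⊕ α) (α ⊕ α) D := fromBlocks a 0 0 1 with hA
  set Bm : Matrix (α ⊕ α) (α ⊕ α) D := fromBlocks b 0 0 1 with hB
  have hAu : IsUnitaryElem A := unitary_fromBlocks ha unitary_one
  have hBu : IsUnitaryElem Bm := unitary_fromBlocks hb unitary_one
  have hcont : Continuous fun t : unitInterval =>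
      A * Rot (t : ℝ) * Bm * star (Rot (t : ℝ) : Matrix (α ⊕ α) (α ⊕ α) D) := by
    have hR : Continuous fun t : unitInterval => (Rot (t : ℝ) : Matrix (α ⊕ α) (α ⊕ α) D) :=
      continuous_Rot.comp continuous_subtype_val
    exact ((continuous_const.mul hR).mul continuous_const).mul (continuous_star.comp hR)
  refine ⟨⟨_, hcont⟩, fun t => ?_, ?_, ?_⟩
  · exact unitary_mul (unitary_mul (unitary_mul hAu (Rot_unitary _)) hBu)
      (unitary_star (Rot_unitary _))
  · show A * Rot ((0 : unitInterval) : ℝ) * Bm * star (Rot _) = _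
    rw [Set.Icc.coe_zero, Rot_zero]
    simp only [mul_one, star_one]
    rw [hA, hB, fromBlocks_multiply]
    simp
  · show A * Rot ((1 : unitInterval) : ℝ) * Bm * star (Rot _) = _
    rw [Set.Icc.coe_one, Rot_one, star_fromBlocks']
    simp only [conjTranspose_neg, conjTranspose_one, conjTranspose_zero]
    rw [hA, hB]
    rw [show (fromBlocks a 0 0 1 * fromBlocks 0 (-1) 1 0 : Matrix (α ⊕ α) (α ⊕ α) D)
        = fromBlocks 0 (-a) 1 0 by rw [fromBlocks_multiply]; simp]
    rw [show (fromBlocks (0 : Matrix α α D) (-a) 1 0 * fromBlocks b 0 0 1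
        : Matrix (α ⊕ α) (α ⊕ α) D) = fromBlocks 0 (-a) b 0 by rw [fromBlocks_multiply]; simp]
    rw [fromBlocks_multiply]
    simp

end Rot

/-! ### K₁ swindle infrastructure -/

section K1core
set_option linter.unusedSectionVars false
variable {D : Type} [CStarAlgebra D]
variable {α β : Type*} [Fintype α] [DecidableEq α] [Fintype β] [DecidableEq β]

theorem uh_stab {u v : Matrix α α D} (h : UnitaryHomotopic u v) :
    UnitaryHomotopic (fromBlocks u 0 0 (1 : Matrix β β D)) (fromBlocks v 0 0 1) := by
  obtain ⟨f, hf, h0, h1⟩ := h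
  have hcont : Continuous fun t : unitInterval =>
      (fromBlocks (f t) 0 0 (1 : Matrix β β D)) := by
    apply continuous_pi; intro i; apply continuous_pi; intro j
    rcases i with i | i <;> rcases j with j | j <;>
      simp only [fromBlocks_apply₁₁, fromBlocks_apply₁₂, fromBlocks_apply₂₁,
        fromBlocks_apply₂₂]
    · exact (continuous_apply j).comp ((continuous_apply i).comp f.continuous)
    · exact continuous_const
    · exact continuous_const
    · exact continuous_const
  refine ⟨⟨_, hcont⟩, fun t => unitary_fromBlocks (hf t) unitary_one, ?_, ?_⟩
  · show fromBlocks (f 0) 0 0 _ = _; rw [h0]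
  · show fromBlocks (f 1) 0 0 _ = _; rw [h1]

theorem uh_submatrix {γ : Type*} [Fintype γ] [DecidableEq γ] (e : γ ≃ α)
    {A B : Matrix α α D} (h : UnitaryHomotopic A B) :
    UnitaryHomotopic (A.submatrix e e) (B.submatrix e e) := by
  obtain ⟨f, hf, h0, h1⟩ := h
  have hcont : Continuous fun t : unitInterval => ((f t).submatrix e e) := by
    apply continuous_pi; intro i; apply continuous_pi; intro j
    exact (continuous_apply (e j)).comp ((continuous_apply (e i)).comp f.continuous)
  refine ⟨⟨_, hcont⟩, fun t => ?_, ?_, ?_⟩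
  · show IsUnitaryElem ((f t).submatrix ⇑e ⇑e)
    constructor
    · rw [Matrix.star_eq_conjTranspose, conjTranspose_submatrix,
        ← Matrix.star_eq_conjTranspose, submatrix_mul_equiv, (hf t).1, submatrix_one_equiv]
    · rw [Matrix.star_eq_conjTranspose, conjTranspose_submatrix,
        ← Matrix.star_eq_conjTranspose, submatrix_mul_equiv, (hf t).2, submatrix_one_equiv]
  · show (f 0).submatrix e e = _; rw [h0]
  · show (f 1).submatrix e e = _; rw [h1]

theorem conj_corner {S : Matrix α α D} (hS : star S * S = 1) (u : Matrix α α D) :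
    ∃ Z : Matrix (α ⊕ α) (α ⊕ α) D, IsUnitaryElem Z ∧
      Z * (fromBlocks u 0 0 1) * star Z
        = fromBlocks (S * u * star S + (1 - S * star S)) 0 0 1 := by
  set e := S * star S with he_def
  have hee : e * e = e := by
    calc e * e = S * ((star S * S) * star S) := by rw [he_def]; simp only [mul_assoc]
    _ = e := by rw [hS, one_mul, he_def]
  have heS : e * S = S := by
    calc e * S = S * (star S * S) := by rw [he_def]; simp only [mul_assoc]
    _ = S := by rw [hS, mul_one]
  have hSe : star S * e = star S := by
    calc star S * e = (star S * S) * star S := by rw [he_def]; simp only [mul_assoc]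
    _ = star S := by rw [hS, one_mul]
  have hestar : star e = e := by
    rw [he_def, StarMul.star_mul, star_star]
  have h1e : (1 - e) * (1 - e) = 1 - e := by
    rw [sub_mul, one_mul, mul_sub, mul_one, hee]; abel
  have h1eS : (1 - e) * S = 0 := by rw [sub_mul, one_mul, heS, sub_self]
  have hSe1 : star S * (1 - e) = 0 := by rw [mul_sub, mul_one, hSe, sub_self]
  have h1estar : star (1 - e) = 1 - e := by rw [star_sub, star_one, hestar]
  refine ⟨fromBlocks S (1 - e) 0 (star S), ?_, ?_⟩
  · have hZ1 : star (fromBlocks S (1 - e) 0 (star S))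
        = fromBlocks (star S) 0 (1 - e) S := by
      have h1estar' : ((1 - e : Matrix α α D))ᴴ = 1 - e := h1estar
      rw [star_fromBlocks', h1estar', star_star]
      simp only [conjTranspose_zero]
    constructor
    · rw [hZ1, fromBlocks_multiply]
      rw [show star S * S + (0 : Matrix α α D) * 0 = 1 by rw [hS]; simp]
      rw [show star S * (1 - e) + (0 : Matrix α α D) * star S = 0 by rw [hSe1]; simp]
      rw [show (1 - e) * S + S * (0 : Matrix α α D) = 0 by rw [h1eS]; simp]
      rw [show (1 - e) * (1 - e) + S * star S = 1 by rw [h1e, ← he_def]; abel]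
      exact fromBlocks_one
    · rw [hZ1, fromBlocks_multiply]
      rw [show S * star S + (1 - e) * (1 - e) = 1 by rw [h1e, ← he_def]; abel]
      rw [show S * (0 : Matrix α α D) + (1 - e) * S = 0 by rw [h1eS]; simp]
      rw [show (0 : Matrix α α D) * star S + star S * (1 - e) = 0 by rw [hSe1]; simp]
      rw [show (0 : Matrix α α D) * 0 + star S * S = 1 by rw [hS]; simp]
      exact fromBlocks_one
  · have hZ1 : star (fromBlocks S (1 - e) 0 (star S))
        = fromBlocks (star S) 0 (1 - e) S := by
      have h1estar' : ((1 - e : Matrix α α D))ᴴ = 1 - e := h1estar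
      rw [star_fromBlocks', h1estar', star_star]
      simp only [conjTranspose_zero]
    rw [hZ1, fromBlocks_multiply]
    rw [show S * u + (1 - e) * (0 : Matrix α α D) = S * u by simp]
    rw [show S * (0 : Matrix α α D) + (1 - e) * 1 = 1 - e by simp]
    rw [show (0 : Matrix α α D) * u + star S * 0 = 0 by simp]
    rw [show (0 : Matrix α α D) * 0 + star S * 1 = star S by simp]
    rw [fromBlocks_multiply]
    rw [show S * u * star S + (1 - e) * (1 - e) = S * u * star S + (1 - e) by rw [h1e]]
    rw [show S * u * (0 : Matrix α α D) + (1 - e) * S = 0 by rw [h1eS]; simp]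
    rw [show (0 : Matrix α α D) * star S + star S * (1 - e) = 0 by rw [hSe1]; simp]
    rw [show (0 : Matrix α α D) * 0 + star S * S = 1 by rw [hS]; simp]

theorem unitary_corner {S u : Matrix α α D} (hS : star S * S = 1) (hu : IsUnitaryElem u) :
    IsUnitaryElem (S * u * star S + (1 - S * star S)) := by
  obtain ⟨Z, hZ, hconj⟩ := conj_corner hS u
  have h4 : IsUnitaryElem (fromBlocks (S * u * star S + (1 - S * star S)) 0 0
      (1 : Matrix α α D)) := by
    rw [← hconj]
    exact unitary_mul (unitary_mul hZ (unitary_fromBlocks hu unitary_one)) (unitary_star hZ)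
  set X := S * u * star S + (1 - S * star S) with hX
  have htb1 : (Matrix.toBlocks₁₁ (1 : Matrix (α ⊕ α) (α ⊕ α) D)) = 1 := by
    ext i j; simp [Matrix.toBlocks₁₁, Matrix.one_apply]
  constructor
  · have := h4.1
    rw [star_fromBlocks'] at this
    rw [fromBlocks_multiply] at this
    have := congrArg Matrix.toBlocks₁₁ this
    simpa [Matrix.toBlocks_fromBlocks₁₁, htb1] using this
  · have := h4.2
    rw [star_fromBlocks'] at this
    rw [fromBlocks_multiply] at this
    have := congrArg Matrix.toBlocks₁₁ this
    simpa [Matrix.toBlocks_fromBlocks₁₁, htb1] using this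

/-- conjugation invariance after one stabilization -/
theorem uh_conj {w z : Matrix α α D} (hw : IsUnitaryElem w) (hz : IsUnitaryElem z) :
    UnitaryHomotopic (fromBlocks (z * w * star z) 0 0 1 : Matrix (α ⊕ α) (α ⊕ α) D)
      (fromBlocks w 0 0 1) := by
  have h1 : UnitaryHomotopic (1 : Matrix (α ⊕ α) (α ⊕ α) D) (fromBlocks z 0 0 (star z)) := by
    have := uh_whitehead hz (unitary_star hz)
    rwa [hz.2, fromBlocks_one] at this
  obtain ⟨g, hg, hg0, hg1⟩ := h1
  set W : Matrix (α ⊕ α) (α ⊕ α) D := fromBlocks w 0 0 1 with hW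
  have hcont : Continuous fun t : unitInterval => g t * W * star (g t) := by
    exact ((g.continuous.mul continuous_const).mul (continuous_star.comp g.continuous))
  have key : UnitaryHomotopic W (fromBlocks (z * w * star z) 0 0 1) := by
    refine ⟨⟨_, hcont⟩, fun t => ?_, ?_, ?_⟩
    · exact unitary_mul (unitary_mul (hg t) (unitary_fromBlocks hw unitary_one))
        (unitary_star (hg t))
    · show g 0 * W * star (g 0) = W
      rw [hg0, one_mul, star_one, mul_one]
    · show g 1 * W * star (g 1) = _
      have hstz : star (fromBlocks z 0 0 (star z) : Matrix (α ⊕ α) (α ⊕ α) D)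
          = fromBlocks (star z) 0 0 z := by
        rw [star_fromBlocks', star_star]
        simp only [conjTranspose_zero]
      rw [hg1, hW, hstz]
      rw [show (fromBlocks z 0 0 (star z) * fromBlocks w 0 0 1 : Matrix (α ⊕ α) (α ⊕ α) D)
          = fromBlocks (z * w) 0 0 (star z) by rw [fromBlocks_multiply]; simp]
      rw [fromBlocks_multiply]
      simp [hz.1]
  exact uh_symm key

theorem K1_core {S1 Si U V : Matrix α α D}
    (hS1 : star S1 * S1 = 1) (hSi : star Si * Si = 1) (hOrth : star S1 * Si = 0)
    (hsumM : S1 * star S1 + Si * star Si = 1)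
    (hU : IsUnitaryElem U) (hV : IsUnitaryElem V)
    (habsV : V = S1 * U * star S1 + Si * V * star Si) :
    UnitaryHomotopic
      (fromBlocks (fromBlocks U 0 0 (1 : Matrix α α D)) 0 0 (1 : Matrix (α ⊕ α) (α ⊕ α) D))
      1 := by
  set X := S1 * U * star S1 + (1 - S1 * star S1) with hXdef
  set Y := Si * V * star Si + (1 - Si * star Si) with hYdef
  have hXu : IsUnitaryElem X := unitary_corner hS1 hU
  have hYu : IsUnitaryElem Y := unitary_corner hSi hV
  have hYalt : Y = Si * V * star Si + S1 * star S1 := by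
    rw [hYdef]; congr 1; rw [← hsumM]; abel
  have hXY : X * Y = V := by
    rw [hXdef, hYalt]
    have t1 : (S1 * U * star S1) * (Si * V * star Si) = 0 := by
      calc (S1 * U * star S1) * (Si * V * star Si)
          = S1 * U * (star S1 * Si) * (V * star Si) := by simp only [mul_assoc]
      _ = 0 := by rw [hOrth]; simp
    have t2 : (S1 * U * star S1) * (S1 * star S1) = S1 * U * star S1 := by
      calc (S1 * U * star S1) * (S1 * star S1)
          = S1 * U * ((star S1 * S1) * star S1) := by simp only [mul_assoc]
      _ = S1 * U * star S1 := by rw [hS1, one_mul]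
    have t3 : (1 - S1 * star S1) * (Si * V * star Si) = Si * V * star Si := by
      rw [sub_mul, one_mul]
      rw [show (S1 * star S1) * (Si * V * star Si)
          = S1 * (star S1 * Si) * (V * star Si) by simp only [mul_assoc]]
      rw [hOrth]; simp
    have t4 : (1 - S1 * star S1) * (S1 * star S1) = 0 := by
      rw [sub_mul, one_mul]
      rw [show (S1 * star S1) * (S1 * star S1)
          = S1 * ((star S1 * S1) * star S1) by simp only [mul_assoc]]
      rw [hS1, one_mul, sub_self]
    rw [add_mul, mul_add, mul_add, t1, t2, t3, t4]
    conv_rhs => rw [habsV]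
    abel
  have hU2 : IsUnitaryElem (fromBlocks U 0 0 (1 : Matrix α α D)) :=
    unitary_fromBlocks hU unitary_one
  have hV2 : IsUnitaryElem (fromBlocks V 0 0 (1 : Matrix α α D)) :=
    unitary_fromBlocks hV unitary_one
  obtain ⟨Z1, hZ1u, hZ1c⟩ := conj_corner hS1 U
  obtain ⟨Zi, hZiu, hZic⟩ := conj_corner hSi V
  have hZ1c' : Z1 * (fromBlocks U 0 0 1) * star Z1 = fromBlocks X 0 0 1 := by
    rw [hXdef]; exact hZ1c
  have hZic' : Zi * (fromBlocks V 0 0 1) * star Zi = fromBlocks Y 0 0 1 := by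
    rw [hYdef]; exact hZic
  have w1 : UnitaryHomotopic (fromBlocks V 0 0 1 : Matrix (α ⊕ α) (α ⊕ α) D)
      (fromBlocks X 0 0 Y) := by
    have := uh_whitehead hXu hYu; rwa [hXY] at this
  have w2 : UnitaryHomotopic (fromBlocks Y 0 0 1 : Matrix (α ⊕ α) (α ⊕ α) D)
      (fromBlocks 1 0 0 Y) := by
    have := uh_whitehead unitary_one hYu; rwa [one_mul] at this
  have e2 : (fromBlocks X 0 0 Y : Matrix (α ⊕ α) (α ⊕ α) D)
      = fromBlocks X 0 0 1 * fromBlocks 1 0 0 Y := by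
    rw [fromBlocks_multiply]; simp
  have w3 : UnitaryHomotopic (fromBlocks V 0 0 1 : Matrix (α ⊕ α) (α ⊕ α) D)
      (fromBlocks X 0 0 1 * fromBlocks Y 0 0 1) := by
    refine uh_trans w1 ?_
    rw [e2]
    exact uh_mul (uh_refl (unitary_fromBlocks hXu unitary_one)) (uh_symm w2)
  have big1 : UnitaryHomotopic
      (fromBlocks (fromBlocks V 0 0 (1 : Matrix α α D)) 0 0 (1 : Matrix (α ⊕ α) (α ⊕ α) D))
      (fromBlocks ((fromBlocks X 0 0 1 * fromBlocks Y 0 0 1 : Matrix (α ⊕ α) (α ⊕ α) D)) 0 0 1) :=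
    uh_stab w3
  have e4 : (fromBlocks ((fromBlocks X 0 0 1 * fromBlocks Y 0 0 1 : Matrix (α ⊕ α) (α ⊕ α) D)) 0 0
        (1 : Matrix (α ⊕ α) (α ⊕ α) D))
      = fromBlocks (fromBlocks X 0 0 (1 : Matrix α α D)) 0 0 (1 : Matrix (α ⊕ α) (α ⊕ α) D)
        * fromBlocks (fromBlocks Y 0 0 (1 : Matrix α α D)) 0 0 (1 : Matrix (α ⊕ α) (α ⊕ α) D) := by
    rw [fromBlocks_multiply]; simp [fromBlocks_multiply]
  have cX : UnitaryHomotopic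
      (fromBlocks (fromBlocks X 0 0 (1 : Matrix α α D)) 0 0 (1 : Matrix (α ⊕ α) (α ⊕ α) D))
      (fromBlocks (fromBlocks U 0 0 (1 : Matrix α α D)) 0 0 (1 : Matrix (α ⊕ α) (α ⊕ α) D)) := by
    rw [← hZ1c']
    exact uh_conj hU2 hZ1u
  have cY : UnitaryHomotopic
      (fromBlocks (fromBlocks Y 0 0 (1 : Matrix α α D)) 0 0 (1 : Matrix (α ⊕ α) (α ⊕ α) D))
      (fromBlocks (fromBlocks V 0 0 (1 : Matrix α α D)) 0 0 (1 : Matrix (α ⊕ α) (α ⊕ α) D)) := by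
    rw [← hZic']
    exact uh_conj hV2 hZiu
  set A4 := fromBlocks (fromBlocks V 0 0 (1 : Matrix α α D)) 0 0 (1 : Matrix (α ⊕ α) (α ⊕ α) D)
    with hA4
  have hA4u : IsUnitaryElem A4 := unitary_fromBlocks hV2 unitary_one
  have main : UnitaryHomotopic A4
      (fromBlocks (fromBlocks U 0 0 (1 : Matrix α α D)) 0 0 (1 : Matrix (α ⊕ α) (α ⊕ α) D)
        * A4) := by
    refine uh_trans big1 ?_
    rw [e4]
    exact uh_mul cX cY
  have final := uh_mul main (uh_refl (unitary_star hA4u))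
  rw [hA4u.2, mul_assoc, hA4u.2, mul_one] at final
  exact uh_symm final

end K1core

end Swindle

/-- If every element `x` of a unital C*-algebra `D` admits an "infinite
repeat" `Φ x = Σ rₙ x rₙ*` (the assignment being a *-homomorphism, per the context)
satisfying the Cuntz-sum absorption identity `Φ x = r₁ x r₁* + r∞ (Φ x) r∞*` for
isometries `r₁, r∞` with `r₁ r₁* + r∞ r∞* = 1`, then the identity of `D` induces zero on
K-theory; in particular `K₀(D) = 0` and `K₁(D) = 0`. -/
theorem infinite_repeat_trivial_K_theory
    (D : Type) [CStarAlgebra D]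
    (r : ℕ → D) (hr : ∀ n, 1 ≤ n → star (r n) * r n = 1)
    (rinf : D) (hrinf : star rinf * rinf = 1)
    (hsum : r 1 * star (r 1) + rinf * star rinf = 1)
    (Φ : D →⋆ₙₐ[ℂ] D)
    (habs : ∀ x : D, Φ x = r 1 * x * star (r 1) + rinf * Φ x * star rinf) :
    K0Trivial D ∧ K1Trivial D := by
  classical
  have hs1 : star (r 1) * r 1 = 1 := hr 1 le_rfl
  have orth : star (r 1) * rinf = 0 := by
    have pp : r 1 * star (r 1) * (r 1 * star (r 1)) = r 1 * star (r 1) := by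
      calc r 1 * star (r 1) * (r 1 * star (r 1))
          = r 1 * ((star (r 1) * r 1) * star (r 1)) := by simp only [mul_assoc]
      _ = r 1 * star (r 1) := by rw [hs1, one_mul]
    have hq : rinf * star rinf = 1 - r 1 * star (r 1) := eq_sub_of_add_eq' hsum
    have h0 : r 1 * star (r 1) * (rinf * star rinf) = 0 := by
      rw [hq, mul_sub, mul_one, pp, sub_self]
    calc star (r 1) * rinf
        = (star (r 1) * r 1) * (star (r 1) * rinf) * (star rinf * rinf) := by
          rw [hs1, hrinf, one_mul, mul_one]
    _ = star (r 1) * (r 1 * star (r 1) * (rinf * star rinf)) * rinf := by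
          simp only [mul_assoc]
    _ = 0 := by rw [h0, mul_zero, zero_mul]
  constructor
  · -- K₀
    intro k P hP
    refine ⟨k, ?_⟩
    set S1 : Matrix (Fin k) (Fin k) D := Matrix.diagonal (fun _ => r 1) with hS1def
    set Si : Matrix (Fin k) (Fin k) D := Matrix.diagonal (fun _ => rinf) with hSidef
    have hstarS1 : star S1 = Matrix.diagonal (fun _ : Fin k => star (r 1)) := by
      rw [hS1def, Matrix.star_eq_conjTranspose, Matrix.diagonal_conjTranspose]
      rfl
    have hstarSi : star Si = Matrix.diagonal (fun _ : Fin k => star rinf) := by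
      rw [hSidef, Matrix.star_eq_conjTranspose, Matrix.diagonal_conjTranspose]
      rfl
    have hS1M : star S1 * S1 = 1 := by
      rw [hstarS1, hS1def, Matrix.diagonal_mul_diagonal]
      rw [show (fun i : Fin k => star (r 1) * r 1) = fun _ => (1 : D) from
        funext fun i => hs1]
      exact Matrix.diagonal_one
    have hSiM : star Si * Si = 1 := by
      rw [hstarSi, hSidef, Matrix.diagonal_mul_diagonal]
      rw [show (fun i : Fin k => star rinf * rinf) = fun _ => (1 : D) from
        funext fun i => hrinf]
      exact Matrix.diagonal_one
    have hOrthM : star S1 * Si = 0 := by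
      rw [hstarS1, hSidef, Matrix.diagonal_mul_diagonal]
      rw [show (fun i : Fin k => star (r 1) * rinf) = fun _ => (0 : D) from
        funext fun i => orth]
      exact Matrix.diagonal_zero
    have hmapmul : ∀ X Y : Matrix (Fin k) (Fin k) D, (X * Y).map Φ = X.map Φ * Y.map Φ := by
      intro X Y; ext i j
      simp [Matrix.mul_apply, Matrix.map_apply, map_sum, map_mul]
    have hmapstar : ∀ X : Matrix (Fin k) (Fin k) D, (star X).map Φ = star (X.map Φ) := by
      intro X; ext i j
      simp [Matrix.map_apply, Matrix.conjTranspose_apply, map_star,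
        Matrix.star_eq_conjTranspose]
    set Q := P.map Φ with hQdef
    have hQ : IsProjectionElem Q := by
      constructor
      · rw [hQdef, ← hmapmul, hP.1]
      · rw [hQdef, ← hmapstar, hP.2]
    have habsQ : Q = S1 * P * star S1 + Si * Q * star Si := by
      ext i j
      rw [hQdef, hstarS1, hstarSi, hS1def, hSidef]
      simp only [Matrix.add_apply, Matrix.mul_diagonal, Matrix.diagonal_mul, Matrix.map_apply]
      exact habs (P i j)
    exact Swindle.K0_core hS1M hSiM hOrthM hP hQ habsQ
  · -- K₁
    intro k U hU
    refine ⟨k + (k + k), ?_⟩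
    set S1 : Matrix (Fin k) (Fin k) D := Matrix.diagonal (fun _ => r 1) with hS1def
    set Si : Matrix (Fin k) (Fin k) D := Matrix.diagonal (fun _ => rinf) with hSidef
    have hstarS1 : star S1 = Matrix.diagonal (fun _ : Fin k => star (r 1)) := by
      rw [hS1def, Matrix.star_eq_conjTranspose, Matrix.diagonal_conjTranspose]
      rfl
    have hstarSi : star Si = Matrix.diagonal (fun _ : Fin k => star rinf) := by
      rw [hSidef, Matrix.star_eq_conjTranspose, Matrix.diagonal_conjTranspose]
      rfl
    have hS1M : star S1 * S1 = 1 := by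
      rw [hstarS1, hS1def, Matrix.diagonal_mul_diagonal]
      rw [show (fun i : Fin k => star (r 1) * r 1) = fun _ => (1 : D) from
        funext fun i => hs1]
      exact Matrix.diagonal_one
    have hSiM : star Si * Si = 1 := by
      rw [hstarSi, hSidef, Matrix.diagonal_mul_diagonal]
      rw [show (fun i : Fin k => star rinf * rinf) = fun _ => (1 : D) from
        funext fun i => hrinf]
      exact Matrix.diagonal_one
    have hOrthM : star S1 * Si = 0 := by
      rw [hstarS1, hSidef, Matrix.diagonal_mul_diagonal]
      rw [show (fun i : Fin k => star (r 1) * rinf) = fun _ => (0 : D) from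
        funext fun i => orth]
      exact Matrix.diagonal_zero
    have hsumMM : S1 * star S1 + Si * star Si = 1 := by
      rw [hstarS1, hSidef, hS1def, hstarSi, Matrix.diagonal_mul_diagonal,
        Matrix.diagonal_mul_diagonal, Matrix.diagonal_add]
      rw [show (fun i : Fin k => r 1 * star (r 1) + rinf * star rinf) = fun _ => (1 : D) from
        funext fun i => hsum]
      exact Matrix.diagonal_one
    have hmapmul : ∀ X Y : Matrix (Fin k) (Fin k) D, (X * Y).map Φ = X.map Φ * Y.map Φ := by
      intro X Y; ext i j
      simp [Matrix.mul_apply, Matrix.map_apply, map_sum, map_mul]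
    have hmapstar : ∀ X : Matrix (Fin k) (Fin k) D, (star X).map Φ = star (X.map Φ) := by
      intro X; ext i j
      simp [Matrix.map_apply, Matrix.conjTranspose_apply, map_star,
        Matrix.star_eq_conjTranspose]
    have habsM : ∀ X : Matrix (Fin k) (Fin k) D,
        X.map Φ = S1 * X * star S1 + Si * (X.map Φ) * star Si := by
      intro X
      ext i j
      rw [hstarS1, hstarSi, hS1def, hSidef]
      simp only [Matrix.add_apply, Matrix.mul_diagonal, Matrix.diagonal_mul, Matrix.map_apply]
      exact habs (X i j)
    set E := (1 : Matrix (Fin k) (Fin k) D).map Φ with hEdef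
    set V := U.map Φ + (1 - E) with hVdef
    have hE1 : E * E = E := by rw [hEdef, ← hmapmul, one_mul]
    have hEstar : star E = E := by rw [hEdef, ← hmapstar, star_one]
    have hUmapE : U.map Φ * E = U.map Φ := by rw [hEdef, ← hmapmul, mul_one]
    have hEUmap : E * U.map Φ = U.map Φ := by rw [hEdef, ← hmapmul, one_mul]
    have hstarUmap : star (U.map Φ) = (star U).map Φ := (hmapstar U).symm
    have hstarUE : (star U).map Φ * E = (star U).map Φ := by rw [hEdef, ← hmapmul, mul_one]
    have hEstarU : E * (star U).map Φ = (star U).map Φ := by rw [hEdef, ← hmapmul, one_mul]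
    have h1E : (1 - E) * (1 - E) = 1 - E := by
      rw [sub_mul, one_mul, mul_sub, mul_one, hE1]; abel
    have hVu : IsUnitaryElem V := by
      have hstarV : star V = (star U).map Φ + (1 - E) := by
        rw [hVdef, star_add, star_sub, star_one, hEstar, hstarUmap]
      constructor
      · rw [hstarV, hVdef, add_mul, mul_add, mul_add]
        rw [show (star U).map Φ * U.map Φ = E by rw [← hmapmul, hU.1, hEdef]]
        rw [show (star U).map Φ * (1 - E) = 0 by rw [mul_sub, mul_one, hstarUE, sub_self]]
        rw [show (1 - E) * U.map Φ = 0 by rw [sub_mul, one_mul, hEUmap, sub_self]]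
        rw [h1E]
        abel
      · rw [hstarV, hVdef, add_mul, mul_add, mul_add]
        rw [show U.map Φ * (star U).map Φ = E by rw [← hmapmul, hU.2, hEdef]]
        rw [show U.map Φ * (1 - E) = 0 by rw [mul_sub, mul_one, hUmapE, sub_self]]
        rw [show (1 - E) * (star U).map Φ = 0 by rw [sub_mul, one_mul, hEstarU, sub_self]]
        rw [h1E]
        abel
    have habsV : V = S1 * U * star S1 + Si * V * star Si := by
      have e1 : Si * (U.map Φ) * star Si = U.map Φ - S1 * U * star S1 :=
        eq_sub_of_add_eq' (habsM U).symm
      have e2 : Si * E * star Si = E - S1 * star S1 := by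
        have h := habsM 1
        rw [mul_one, ← hEdef] at h
        exact eq_sub_of_add_eq' h.symm
      have e3 : Si * star Si = 1 - S1 * star S1 := eq_sub_of_add_eq' hsumMM
      rw [hVdef]
      rw [show Si * (U.map Φ + (1 - E)) * star Si
          = Si * (U.map Φ) * star Si + (Si * star Si - Si * E * star Si) by
        rw [mul_add, add_mul, mul_sub, mul_one, sub_mul]]
      rw [e1, e2, e3]
      abel
    have core := Swindle.K1_core hS1M hSiM hOrthM hsumMM hU hVu habsV
    have step1 := Swindle.uh_submatrix
      (Equiv.sumAssoc (Fin k) (Fin k) (Fin k ⊕ Fin k)).symm core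
    rw [Swindle.fromBlocks_assoc, Matrix.fromBlocks_one, Matrix.submatrix_one_equiv] at step1
    set eFin : Fin (k + (k + k)) ≃ Fin k ⊕ (Fin k ⊕ Fin k) :=
      finSumFinEquiv.symm.trans ((Equiv.refl (Fin k)).sumCongr finSumFinEquiv.symm) with heFin
    have step2 := Swindle.uh_submatrix ((Equiv.refl (Fin k)).sumCongr eFin) step1
    rw [Matrix.submatrix_one_equiv] at step2
    have hcoe : ⇑((Equiv.refl (Fin k)).sumCongr eFin) = Sum.map id ⇑eFin := by
      funext x; cases x <;> simp
    rw [hcoe, Swindle.fromBlocks_reindex_right] at step2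
    exact step2
end
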